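/- arXiv:1108.3632 — 8 statements merged into one kernel-verified Lean document; each statement's English description precedes it below -/
import Mathlib

section
/- Let w be a bispecial word of the language T^∞ of tangent words which is not diagonal. Then exactly one of the two desubstitutions applies to w, the resulting word δ(w) is again bispecial in T^∞, and it has the same number of two-sided extensions: card{(a,b) ∈ {0,1}² : a·δ(w)·b ∈ T^∞} = card{(a,b) ∈ {0,1}² : a·w·b ∈ T^∞}. -/
/-- Helper for deleting one letter `c` from each maximal run of `c`s.
The flag is `true` when we are at the start of the word or just after a letter `≠ c`,
i.e. when the next occurrence of `c` starts a maximal run and must be deleted. -/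
def delRunAux (c : Bool) : Bool → List Bool → List Bool
  | _, [] => []
  | del, a :: l =>
      if a = c then
        (if del then delRunAux c false l else a :: delRunAux c false l)
      else a :: delRunAux c true l

/-- Delete one letter `c` from each maximal run of `c`s in `w`. -/
def delRun (c : Bool) (w : List Bool) : List Bool := delRunAux c true w

/-- `Desub w v` : `v` is a desubstitution of the nonempty word `w`
(letter `0` is `false`, letter `1` is `true`):
if `11` does not occur in `w` one may delete one `0` from each maximal run of `0`s,
and if `00` does not occur in `w` one may delete one `1` from each maximal run of `1`s. -/
def Desub (w v : List Bool) : Prop :=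
  w ≠ [] ∧
    ((¬ [true, true] <:+: w ∧ v = delRun false w) ∨
     (¬ [false, false] <:+: w ∧ v = delRun true w))

/-- States of the three-state "diagonal" automaton. -/
inductive DiagState | Q | R | S
  deriving DecidableEq

/-- Transitions of the diagonal automaton:
Q→R on 0, R→Q on 1, R→S on 0, S→R on 1. -/
def diagStep : DiagState → Bool → Option DiagState
  | .Q, false => some .R
  | .R, true  => some .Q
  | .R, false => some .S
  | .S, true  => some .R
  | _, _ => none

/-- States of the eight-state "non-oscillating diagonal" automaton. -/
inductive NOState | B | R | S | T | U | C | D | E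
  deriving DecidableEq

/-- Transitions of the non-oscillating diagonal automaton:
B→R on 0, R→B on 1, R→S on 0, S→T on 1, T→S on 0, T→U on 1, U→E on 0, E→U on 1,
B→C on 1, C→D on 0, D→C on 1, D→E on 0. -/
def noStep : NOState → Bool → Option NOState
  | .B, false => some .R
  | .B, true  => some .C
  | .R, false => some .S
  | .R, true  => some .B
  | .S, true  => some .T
  | .T, false => some .S
  | .T, true  => some .U
  | .U, false => some .E
  | .C, false => some .D
  | .D, false => some .E
  | .D, true  => some .C
  | .E, true  => some .U
  | _, _ => none

/-- The list of states visited when reading a word from state `q`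
in a (partial deterministic) automaton, if the whole word can be read. -/
def autTraj {σ : Type} (step : σ → Bool → Option σ) : σ → List Bool → Option (List σ)
  | q, [] => some [q]
  | q, a :: l => (step q a).bind fun q' => (autTraj step q' l).map (q :: ·)

/-- A word is diagonal if it labels a path of the diagonal automaton
(all states are initial and accepting). -/
def Diagonal (w : List Bool) : Prop := ∃ q : DiagState, (autTraj diagStep q w).isSome

/-- A word is non-oscillating diagonal if it labels a path of the non-oscillating
diagonal automaton (all states are initial and accepting). -/
def NonOscDiagonal (w : List Bool) : Prop := ∃ q : NOState, (autTraj noStep q w).isSome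

/-- A word is tangent if some finite sequence of desubstitutions leads to a diagonal word. -/
def Tangent (w : List Bool) : Prop :=
  ∃ v, Relation.ReflTransGen Desub w v ∧ Diagonal v

/-- A word is tangent analytic if some finite sequence of desubstitutions leads to a
non-oscillating diagonal word. -/
def TangentAnalytic (w : List Bool) : Prop :=
  ∃ v, Relation.ReflTransGen Desub w v ∧ NonOscDiagonal v

/-- A word is `k`-balanced if any two factors of the same length have numbers of `1`s
differing by at most `k`. -/
def BalancedWord (k : ℕ) (w : List Bool) : Prop :=
  ∀ u v : List Bool, u <:+: w → v <:+: w → u.length = v.length →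
    |(u.count true : ℤ) - (v.count true : ℤ)| ≤ (k : ℤ)

/-- `pcount L n` is the complexity `p_n(L)`: the number of words of length `n` in `L`. -/
noncomputable def pcount (L : Set (List Bool)) (n : ℕ) : ℕ :=
  Set.ncard {w | w ∈ L ∧ w.length = n}

/-- The language `T^∞` of tangent words. -/
def Tinf : Set (List Bool) := {w | Tangent w}

/-- The language `T^ω` of tangent analytic words. -/
def Tomega : Set (List Bool) := {w | TangentAnalytic w}

/-- A word `w ∈ L` is bispecial when `0w`, `1w`, `w0`, `w1` all belong to `L`. -/
def Bispecial (L : Set (List Bool)) (w : List Bool) : Prop :=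
  w ∈ L ∧ (false :: w) ∈ L ∧ (true :: w) ∈ L ∧ (w ++ [false]) ∈ L ∧ (w ++ [true]) ∈ L

/-- The number of two-sided extensions `a·w·b` of `w` inside `L`. -/
noncomputable def extCount (L : Set (List Bool)) (w : List Bool) : ℕ :=
  Set.ncard {p : Bool × Bool | (p.1 :: (w ++ [p.2])) ∈ L}

/-- A weak bispecial word of `L`. -/
def WeakBispecial (L : Set (List Bool)) (w : List Bool) : Prop :=
  Bispecial L w ∧ extCount L w = 2

/-- A strong bispecial word of `L`. -/
def StrongBispecial (L : Set (List Bool)) (w : List Bool) : Prop :=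
  Bispecial L w ∧ extCount L w = 4

/-- `wb L n` : the number of weak bispecial words of length `n` in `L`. -/
noncomputable def wb (L : Set (List Bool)) (n : ℕ) : ℕ :=
  Set.ncard {w | WeakBispecial L w ∧ w.length = n}

/-- `sb L n` : the number of strong bispecial words of length `n` in `L`. -/
noncomputable def sb (L : Set (List Bool)) (n : ℕ) : ℕ :=
  Set.ncard {w | StrongBispecial L w ∧ w.length = n}

/-- A language is factorial if it is closed under taking factors. -/
def FactorialLang (L : Set (List Bool)) : Prop :=
  ∀ w ∈ L, ∀ u : List Bool, u <:+: w → u ∈ L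

/-- A language is extendable if every word extends on both sides within the language. -/
def ExtendableLang (L : Set (List Bool)) : Prop :=
  ∀ w ∈ L, (∃ a : Bool, (a :: w) ∈ L) ∧ (∃ b : Bool, (w ++ [b]) ∈ L)

/-! A non-diagonal word `w` contains a square `cc`, since alternating words are diagonal, and a
tangent word containing both squares admits no desubstitution, so is diagonal itself. Hence
`w` and its one- and two-sided extensions in `T^∞` (which are not diagonal either, diagonal
words being closed under factors) all avoid `!c!c`, so their only desubstitution is `delRun c`.
In particular `w` begins and ends with `c`, so `delRun c` commutes with adding a letter at either
end, and desubstitution is a bijection between the extensions of `w` and those of `delRun c w`. -/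

section Automaton

variable {σ : Type} (step : σ → Bool → Option σ)

theorem isSome_autTraj_of_append_left :
    ∀ {q : σ} {x : List Bool} (y : List Bool),
      (autTraj step q (x ++ y)).isSome → (autTraj step q x).isSome
  | _, [], _, _ => rfl
  | q, a :: x, y, h => by
    cases hq : step q a with
    | none => simp [autTraj, hq] at h
    | some q' =>
      simp only [List.cons_append, autTraj, hq, Option.bind_some, Option.isSome_map] at h ⊢
      exact isSome_autTraj_of_append_left y h

theorem exists_isSome_autTraj_of_append_right :
    ∀ {q : σ} {x y : List Bool},
      (autTraj step q (x ++ y)).isSome → ∃ q', (autTraj step q' y).isSome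
  | q, [], _, h => ⟨q, h⟩
  | q, a :: x, y, h => by
    cases hq : step q a with
    | none => simp [autTraj, hq] at h
    | some q' =>
      simp only [List.cons_append, autTraj, hq, Option.bind_some, Option.isSome_map] at h
      exact exists_isSome_autTraj_of_append_right h

end Automaton

theorem Diagonal.of_infix {u w : List Bool} (hw : Diagonal w) (h : u <:+: w) : Diagonal u := by
  obtain ⟨s, t, rfl⟩ := h
  obtain ⟨q, hq⟩ := hw
  obtain ⟨q', hq'⟩ := exists_isSome_autTraj_of_append_right diagStep (x := s) (by simpa using hq)
  exact ⟨q', isSome_autTraj_of_append_left diagStep t hq'⟩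

theorem isSome_autTraj_diagStep_R_of_forall_not_infix :
    ∀ {w : List Bool}, (∀ c, ¬ [c, c] <:+: w) → (autTraj diagStep .R w).isSome
  | [], _ => rfl
  | [a], _ => by cases a <;> rfl
  | a :: b :: l, h => by
    have hb : b = !a := by
      by_contra hb
      exact h a ⟨[], l, by cases a <;> cases b <;> simp_all⟩
    have hl := isSome_autTraj_diagStep_R_of_forall_not_infix (w := l)
      fun c hc => h c (hc.trans (List.infix_cons (List.infix_cons (List.infix_refl l))))
    subst hb
    cases a <;> simpa [autTraj, diagStep] using hl

theorem exists_infix_pair_of_not_diagonal {w : List Bool} (hnd : ¬ Diagonal w) :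
    ∃ c, [c, c] <:+: w := by
  by_contra! h
  exact hnd ⟨.R, isSome_autTraj_diagStep_R_of_forall_not_infix h⟩

section Desubstitution

variable {c : Bool} {u v : List Bool}

theorem not_desub_of_infix (h : [c, c] <:+: u) (h' : [!c, !c] <:+: u) : ¬ Desub u v := by
  rintro ⟨-, ⟨h11, -⟩ | ⟨h00, -⟩⟩ <;> cases c <;> simp_all

theorem desub_iff_eq_delRun (hcc : [c, c] <:+: u) (hn : ¬ [!c, !c] <:+: u) : Desub u v ↔ v = delRun c u := by
  have hne : u ≠ [] := by rintro rfl; simp at hcc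
  cases c <;> simp_all [Desub]

theorem Tangent.exists_desub (hT : Tangent u) (hnd : ¬ Diagonal u) : ∃ v, Desub u v ∧ Tangent v := by
  obtain ⟨d, hc, hd⟩ := hT
  rcases hc.cases_head with rfl | ⟨v, hv, hvd⟩
  · exact absurd hd hnd
  · exact ⟨v, hv, d, hvd, hd⟩

theorem Tangent.not_infix_of_infix (hT : Tangent u) (hnd : ¬ Diagonal u) (hcc : [c, c] <:+: u) :
    ¬ [!c, !c] <:+: u := fun h =>
  let ⟨_, hv, _⟩ := hT.exists_desub hnd
  not_desub_of_infix hcc h hv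

theorem tangent_delRun_iff (hnd : ¬ Diagonal u) (hcc : [c, c] <:+: u) (hn : ¬ [!c, !c] <:+: u) :
    Tangent (delRun c u) ↔ Tangent u := by
  constructor
  · rintro ⟨d, hc, hd⟩
    exact ⟨d, hc.head ((desub_iff_eq_delRun hcc hn).2 rfl), hd⟩
  · intro hT
    obtain ⟨v, hv, hvT⟩ := hT.exists_desub hnd
    rwa [(desub_iff_eq_delRun hcc hn).1 hv] at hvT

end Desubstitution

section DelRun

variable {c : Bool} {w : List Bool}

theorem delRun_cons_of_head? (hw : w.head? = some c) (a : Bool) :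
    delRun c (a :: w) = a :: delRun c w := by
  obtain _ | ⟨x, l⟩ := w
  · simp at hw
  · obtain rfl : x = c := by simpa using hw
    by_cases ha : a = x <;> simp [delRun, delRunAux, ha]

theorem delRunAux_append_of_getLast? (hw : w.getLast? = some c) (del : Bool) (v : List Bool) :
    delRunAux c del (w ++ v) = delRunAux c del w ++ delRunAux c false v := by
  induction w generalizing del with
  | nil => simp at hw
  | cons x l ih =>
    cases l with
    | nil =>
      obtain rfl : x = c := by simpa using hw
      cases del <;> simp [delRunAux]
    | cons y l =>
      have ih' := ih (by simpa using hw)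
      rw [List.cons_append, delRunAux.eq_2 c del x, delRunAux.eq_2 c del x, ih', ih']
      split_ifs <;> simp

theorem delRun_append_singleton_of_getLast? (hw : w.getLast? = some c) (b : Bool) :
    delRun c (w ++ [b]) = delRun c w ++ [b] := by
  rw [delRun, delRunAux_append_of_getLast? hw]
  by_cases hb : b = c <;> simp [delRun, delRunAux, hb]

theorem not_infix_cons_of_head? (hw : w.head? = some c) (hn : ¬ [!c, !c] <:+: w) (a : Bool) :
    ¬ [!c, !c] <:+: a :: w := by
  rw [List.infix_cons_iff]
  rintro (⟨t, ht⟩ | h)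
  · obtain ⟨-, hw'⟩ := List.cons_eq_cons.1 ht
    cases c <;> simp [← hw'] at hw
  · exact hn h

theorem not_infix_append_singleton_of_getLast? (hw : w.getLast? = some c) (hn : ¬ [!c, !c] <:+: w)
    (b : Bool) : ¬ [!c, !c] <:+: w ++ [b] := by
  rw [List.infix_concat_iff]
  rintro (⟨t, ht⟩ | h)
  · have : w = t ++ [!c] := by simpa using (congrArg List.dropLast ht).symm
    cases c <;> simp [this] at hw
  · exact hn h

end DelRun

section Bispecial

variable {c : Bool} {w : List Bool}

theorem head?_eq_of_tangent_cons (hT : Tangent ((!c) :: w)) (hnd : ¬ Diagonal w)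
    (hcc : [c, c] <:+: w) : w.head? = some c := by
  have hn := hT.not_infix_of_infix (fun h => hnd (h.of_infix (List.suffix_cons _ _).isInfix))
    (List.infix_cons hcc)
  obtain _ | ⟨x, l⟩ := w
  · simp at hcc
  · by_contra hx
    obtain rfl : x = !c := by cases x <;> cases c <;> simp_all
    exact hn ⟨[], l, rfl⟩

theorem getLast?_eq_of_tangent_append (hT : Tangent (w ++ [!c])) (hnd : ¬ Diagonal w)
    (hcc : [c, c] <:+: w) : w.getLast? = some c := by
  have hn := hT.not_infix_of_infix (fun h => hnd (h.of_infix (List.prefix_append _ _).isInfix))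
    (hcc.trans (List.prefix_append _ _).isInfix)
  obtain rfl | ⟨l, x, rfl⟩ := w.eq_nil_or_concat'
  · simp at hcc
  · by_contra hx
    obtain rfl : x = !c := by cases x <;> cases c <;> simp_all
    exact hn ⟨l, [], by simp⟩

theorem mem_Tinf_delRun_iff (hb : Bispecial Tinf w) (hnd : ¬ Diagonal w) (hcc : [c, c] <:+: w)
    (a b : Option Bool) :
    a.toList ++ delRun c w ++ b.toList ∈ Tinf ↔ a.toList ++ w ++ b.toList ∈ Tinf := by
  obtain ⟨hw, h0w, h1w, hw0, hw1⟩ := hb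
  have hn := Tangent.not_infix_of_infix hw hnd hcc
  have hh : w.head? = some c := head?_eq_of_tangent_cons (by cases c; exacts [h1w, h0w]) hnd hcc
  have hl : w.getLast? = some c :=
    getLast?_eq_of_tangent_append (by cases c; exacts [hw1, hw0]) hnd hcc
  have hwx : w <:+: a.toList ++ w ++ b.toList := List.infix_append _ _ _
  have hdel : delRun c (a.toList ++ w ++ b.toList) = a.toList ++ delRun c w ++ b.toList := by
    cases a <;> cases b <;>
      simp [delRun_cons_of_head?, delRun_append_singleton_of_getLast?, hh, hl]
  have hnr : ¬ [!c, !c] <:+: w ++ b.toList := by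
    cases b
    · simpa using hn
    · exact not_infix_append_singleton_of_getLast? hl hn _
  have hnx : ¬ [!c, !c] <:+: a.toList ++ w ++ b.toList := by
    cases a
    · simpa using hnr
    · simpa using not_infix_cons_of_head? (by simp [hh]) hnr _
  rw [← hdel]
  exact tangent_delRun_iff (fun h => hnd (h.of_infix hwx)) (hcc.trans hwx) hnx

theorem Bispecial.delRun (hb : Bispecial Tinf w) (hnd : ¬ Diagonal w) (hcc : [c, c] <:+: w) :
    Bispecial Tinf (delRun c w) := by
  have key := mem_Tinf_delRun_iff hb hnd hcc
  obtain ⟨hw, h0w, h1w, hw0, hw1⟩ := hb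
  exact ⟨by simpa [hw] using key none none, by simpa [h0w] using key (some false) none,
    by simpa [h1w] using key (some true) none, by simpa [hw0] using key none (some false),
    by simpa [hw1] using key none (some true)⟩

theorem extCount_delRun (hb : Bispecial Tinf w) (hnd : ¬ Diagonal w) (hcc : [c, c] <:+: w) :
    extCount Tinf (delRun c w) = extCount Tinf w := by
  unfold extCount
  congr 1
  ext ⟨a, b⟩
  simpa using mem_Tinf_delRun_iff hb hnd hcc (some a) (some b)

end Bispecial

/-- a bispecial word of `T^∞` which is not diagonal can be desubstituted in
exactly one way, and its desubstitution is again bispecial in `T^∞` with the same number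
of two-sided extensions. -/
theorem bispecial_desubstitution (w : List Bool) (hb : Bispecial Tinf w)
    (hnd : ¬ Diagonal w) :
    Xor' (¬ [true, true] <:+: w) (¬ [false, false] <:+: w) ∧
    (∃! v, Desub w v) ∧
    ∀ v, Desub w v → Bispecial Tinf v ∧ extCount Tinf v = extCount Tinf w := by
  obtain ⟨c, hcc⟩ := exists_infix_pair_of_not_diagonal hnd
  have hn := Tangent.not_infix_of_infix hb.1 hnd hcc
  have hdesub (v : List Bool) : Desub w v ↔ v = delRun c w := desub_iff_eq_delRun hcc hn
  refine ⟨?_, ⟨delRun c w, (hdesub _).2 rfl, fun v => (hdesub v).1⟩, fun v hv => ?_⟩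
  · cases c
    · exact .inl ⟨hn, not_not_intro hcc⟩
    · exact .inr ⟨hn, not_not_intro hcc⟩
  · obtain rfl := (hdesub v).1 hv
    exact ⟨hb.delRun hnd hcc, extCount_delRun hb hnd hcc⟩
end

section
/- The language T^ω of tangent analytic words is factorial and extendable: every factor of a tangent analytic word is tangent analytic, and for every tangent analytic word w there exist letters a, b ∈ {0,1} such that aw and wb are tangent analytic. -/
/-!
Both properties pass from a language `L` to the words that reach `L` by a chain of
desubstitutions, by induction on the chain. A nonempty factor `u` of `w` still avoids the
forbidden pair, and `delRun c u` is a factor of `delRun c w`. If `w` begins with the deleted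
letter `c`, then `a w` desubstitutes to `a · delRun c w` for every letter `a`; otherwise `c w`
desubstitutes to `delRun c w` itself, the new run `c` being deleted entirely; symmetrically on
the right. The non-oscillating diagonal words form the language of an automaton whose states
are all initial and accepting and all have an incoming and an outgoing transition, so they are
factorial and extendable.
-/

section Automaton

variable {σ : Type} (step : σ → Bool → Option σ)

def autRun : σ → List Bool → Option σ
  | q, [] => some q
  | q, a :: l => (step q a).bind fun q' => autRun q' l

def autLang : Set (List Bool) := {w | ∃ q, (autTraj step q w).isSome}

theorem autTraj_isSome_iff (l : List Bool) (q : σ) :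
    (autTraj step q l).isSome ↔ (autRun step q l).isSome := by
  induction l generalizing q with
  | nil => simp [autTraj, autRun]
  | cons a l ih => cases h : step q a <;> simp [autTraj, autRun, h, ih]

theorem autRun_append (l₁ l₂ : List Bool) (q : σ) :
    autRun step q (l₁ ++ l₂) = (autRun step q l₁).bind fun q' => autRun step q' l₂ := by
  induction l₁ generalizing q with
  | nil => simp [autRun]
  | cons a l ih => cases h : step q a <;> simp [autRun, h, ih]

theorem mem_autLang_iff {w : List Bool} : w ∈ autLang step ↔ ∃ q, (autRun step q w).isSome :=
  exists_congr fun q => autTraj_isSome_iff step w q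

theorem factorialLang_autLang : FactorialLang (autLang step) := by
  rintro _ hw u ⟨s, t, rfl⟩
  obtain ⟨q, hq⟩ := (mem_autLang_iff step).1 hw
  rw [autRun_append, autRun_append] at hq
  cases hs : autRun step q s with
  | none => simp [hs] at hq
  | some p =>
    refine (mem_autLang_iff step).2 ⟨p, ?_⟩
    cases hu : autRun step p u <;> simp_all

theorem extendableLang_autLang (h_in : ∀ q, ∃ p a, step p a = some q)
    (h_out : ∀ q, ∃ a p, step q a = some p) : ExtendableLang (autLang step) := by
  intro w hw
  obtain ⟨q, hq⟩ := (mem_autLang_iff step).1 hw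
  obtain ⟨r, hr⟩ := Option.isSome_iff_exists.1 hq
  obtain ⟨p, a, hpa⟩ := h_in q
  obtain ⟨b, r', hbr⟩ := h_out r
  exact ⟨⟨a, (mem_autLang_iff step).2 ⟨p, by simp [autRun, hpa, hq]⟩⟩,
    ⟨b, (mem_autLang_iff step).2 ⟨q, by simp [autRun_append, hr, autRun, hbr]⟩⟩⟩

end Automaton

theorem exists_noStep_to (q : NOState) : ∃ p a, noStep p a = some q := by
  cases q
  exacts [⟨.R, true, rfl⟩, ⟨.B, false, rfl⟩, ⟨.R, false, rfl⟩, ⟨.S, true, rfl⟩,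
    ⟨.T, true, rfl⟩, ⟨.B, true, rfl⟩, ⟨.C, false, rfl⟩, ⟨.U, false, rfl⟩]

theorem exists_noStep_from (q : NOState) : ∃ a p, noStep q a = some p := by
  cases q
  exacts [⟨false, .R, rfl⟩, ⟨false, .S, rfl⟩, ⟨true, .T, rfl⟩, ⟨false, .S, rfl⟩,
    ⟨false, .E, rfl⟩, ⟨false, .D, rfl⟩, ⟨false, .E, rfl⟩, ⟨true, .U, rfl⟩]

section DelRun

variable (c : Bool)

/-- The flag of `delRunAux c` after reading `l`. -/
def delRunFlag : Bool → List Bool → Bool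
  | flag, [] => flag
  | _, a :: l => delRunFlag (a != c) l

theorem delRunAux_append (l₁ l₂ : List Bool) (flag : Bool) :
    delRunAux c flag (l₁ ++ l₂) =
      delRunAux c flag l₁ ++ delRunAux c (delRunFlag c flag l₁) l₂ := by
  induction l₁ generalizing flag with
  | nil => rfl
  | cons a l ih => cases a <;> cases c <;> cases flag <;> simp [delRunAux, delRunFlag, ih]

theorem delRunFlag_append (l₁ l₂ : List Bool) (flag : Bool) :
    delRunFlag c flag (l₁ ++ l₂) = delRunFlag c (delRunFlag c flag l₁) l₂ := by
  induction l₁ generalizing flag with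
  | nil => rfl
  | cons a l ih => simp [delRunFlag, ih]

theorem delRun_suffix_delRunAux (flag : Bool) (u : List Bool) :
    delRun c u <:+ delRunAux c flag u := by
  cases flag
  · cases u with
    | nil => exact List.suffix_refl _
    | cons a l => by_cases h : a = c <;> simp [delRun, delRunAux, h]
  · exact List.suffix_refl _

theorem delRun_infix {u w : List Bool} (h : u <:+: w) : delRun c u <:+: delRun c w := by
  obtain ⟨s, t, rfl⟩ := h
  obtain ⟨p, hp⟩ := delRun_suffix_delRunAux c (delRunFlag c true s) u
  refine ⟨delRunAux c true s ++ p, delRunAux c (delRunFlag c (delRunFlag c true s) u) t, ?_⟩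
  simp only [delRun, delRunAux_append, ← hp, List.append_assoc]

theorem delRun_cons_cons (a : Bool) (x : List Bool) :
    delRun c (a :: c :: x) = a :: delRun c (c :: x) := by
  by_cases h : a = c <;> simp [delRun, delRunAux, h]

theorem delRun_cons_not_cons (x : List Bool) :
    delRun c (c :: (!c) :: x) = delRun c ((!c) :: x) := by
  cases c <;> simp [delRun, delRunAux]

theorem delRun_concat_concat (b : Bool) (x : List Bool) :
    delRun c (x ++ [c] ++ [b]) = delRun c (x ++ [c]) ++ [b] := by
  have hflag : delRunFlag c true (x ++ [c]) = false := by simp [delRunFlag_append, delRunFlag]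
  rw [delRun, delRun, delRunAux_append, hflag]
  by_cases h : b = c <;> simp [delRunAux, h]

theorem delRun_concat_not_concat (x : List Bool) :
    delRun c (x ++ [!c] ++ [c]) = delRun c (x ++ [!c]) := by
  have hflag : delRunFlag c true (x ++ [!c]) = true := by
    cases c <;> simp [delRunFlag_append, delRunFlag]
  rw [delRun, delRun, delRunAux_append, hflag]
  simp [delRunAux]

end DelRun

section PairFree

variable {α : Type*} {d : α} {x : List α}

theorem not_pair_infix_cons {a : α} (hx : ¬ [d, d] <:+: x) (h : a ≠ d ∨ x.head? ≠ some d) :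
    ¬ [d, d] <:+: a :: x := by
  rw [List.infix_cons_iff, List.cons_prefix_cons, List.singleton_prefix_iff_head?_eq_some]
  tauto

theorem not_pair_infix_concat {b : α} (hx : ¬ [d, d] <:+: x)
    (h : b ≠ d ∨ x.getLast? ≠ some d) :
    ¬ [d, d] <:+: x ++ [b] := by
  rw [← List.reverse_infix, List.reverse_append]
  exact not_pair_infix_cons (fun h' => hx (by simpa using List.reverse_infix.2 h'))
    (by simpa [List.head?_reverse] using h)

end PairFree

theorem desub_iff {w v : List Bool} :
    Desub w v ↔ w ≠ [] ∧ ∃ c, ¬ [!c, !c] <:+: w ∧ v = delRun c w := by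
  constructor
  · rintro ⟨hw, ⟨hc, rfl⟩ | ⟨hc, rfl⟩⟩
    exacts [⟨hw, false, hc, rfl⟩, ⟨hw, true, hc, rfl⟩]
  · rintro ⟨hw, (_ | _), hc, rfl⟩
    exacts [⟨hw, .inl ⟨hc, rfl⟩⟩, ⟨hw, .inr ⟨hc, rfl⟩⟩]

theorem Desub.of_infix {u w v : List Bool} (h : Desub w v) (hu : u <:+: w) (hne : u ≠ []) :
    ∃ v', Desub u v' ∧ v' <:+: v := by
  obtain ⟨-, c, hc, rfl⟩ := desub_iff.1 h
  exact ⟨delRun c u, desub_iff.2 ⟨hne, c, fun h' => hc (h'.trans hu), rfl⟩,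
    delRun_infix c hu⟩

theorem Desub.cons_cases {w v : List Bool} (h : Desub w v) :
    (∃ a, Desub (a :: w) v) ∨ ∀ a, Desub (a :: w) (a :: v) := by
  obtain ⟨hw, c, hc, rfl⟩ := desub_iff.1 h
  obtain ⟨e, x, rfl⟩ := List.exists_cons_of_ne_nil hw
  by_cases he : e = c
  · subst he
    exact .inr fun a => desub_iff.2 ⟨List.cons_ne_nil _ _, e,
      not_pair_infix_cons hc (.inr (by cases e <;> simp)), (delRun_cons_cons e a x).symm⟩
  · obtain rfl : e = !c := by cases e <;> cases c <;> simp_all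
    exact .inl ⟨c, desub_iff.2 ⟨List.cons_ne_nil _ _, c,
      not_pair_infix_cons hc (.inl (by cases c <;> simp)), (delRun_cons_not_cons c x).symm⟩⟩

theorem Desub.concat_cases {w v : List Bool} (h : Desub w v) :
    (∃ b, Desub (w ++ [b]) v) ∨ ∀ b, Desub (w ++ [b]) (v ++ [b]) := by
  obtain ⟨hw, c, hc, rfl⟩ := desub_iff.1 h
  obtain ⟨x, e, rfl⟩ : ∃ x e, w = x ++ [e] :=
    ⟨_, _, (List.dropLast_append_getLast hw).symm⟩
  by_cases he : e = c
  · subst he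
    exact .inr fun b => desub_iff.2 ⟨by simp, e,
      not_pair_infix_concat hc (.inr (by cases e <;> simp)), (delRun_concat_concat e b x).symm⟩
  · obtain rfl : e = !c := by cases e <;> cases c <;> simp_all
    exact .inl ⟨c, desub_iff.2 ⟨by simp, c,
      not_pair_infix_concat hc (.inl (by cases c <;> simp)),
      (delRun_concat_not_concat c x).symm⟩⟩

def desubClosure (L : Set (List Bool)) : Set (List Bool) :=
  {w | ∃ v, Relation.ReflTransGen Desub w v ∧ v ∈ L}

section DesubClosure

variable {L : Set (List Bool)}

theorem mem_desubClosure_of_desub {w v : List Bool} (h : Desub w v) (hv : v ∈ desubClosure L) :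
    w ∈ desubClosure L :=
  let ⟨v', hvv', hv'⟩ := hv
  ⟨v', .head h hvv', hv'⟩

theorem factorialLang_desubClosure (hL : FactorialLang L) : FactorialLang (desubClosure L) := by
  rintro w ⟨v, hwv, hv⟩ u hu
  induction hwv using Relation.ReflTransGen.head_induction_on generalizing u with
  | refl => exact ⟨u, .refl, hL _ hv u hu⟩
  | head hwy _ ih =>
    rcases eq_or_ne u [] with rfl | hne
    · exact ih _ List.nil_infix
    · obtain ⟨u', hu', hu'y⟩ := hwy.of_infix hu hne
      exact mem_desubClosure_of_desub hu' (ih u' hu'y)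

theorem extendableLang_desubClosure (hL : ExtendableLang L) :
    ExtendableLang (desubClosure L) := by
  rintro w ⟨v, hwv, hv⟩
  induction hwv using Relation.ReflTransGen.head_induction_on with
  | refl =>
    obtain ⟨⟨a, ha⟩, b, hb⟩ := hL v hv
    exact ⟨⟨a, _, .refl, ha⟩, b, _, .refl, hb⟩
  | @head w y hwy hyv ih =>
    obtain ⟨⟨a, ha⟩, b, hb⟩ := ih
    have hy : y ∈ desubClosure L := ⟨v, hyv, hv⟩
    constructor
    · rcases hwy.cons_cases with ⟨a', h⟩ | h
      exacts [⟨a', mem_desubClosure_of_desub h hy⟩, ⟨a, mem_desubClosure_of_desub (h a) ha⟩]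
    · rcases hwy.concat_cases with ⟨b', h⟩ | h
      exacts [⟨b', mem_desubClosure_of_desub h hy⟩, ⟨b, mem_desubClosure_of_desub (h b) hb⟩]

end DesubClosure

/-- `T^ω` is factorial and extendable. -/
theorem tangent_analytic_factorial_extendable :
    (∀ w, TangentAnalytic w → ∀ u : List Bool, u <:+: w → TangentAnalytic u) ∧
    (∀ w, TangentAnalytic w →
      ∃ a b : Bool, TangentAnalytic (a :: w) ∧ TangentAnalytic (w ++ [b])) := by
  have hbase : FactorialLang (autLang noStep) ∧ ExtendableLang (autLang noStep) :=
    ⟨factorialLang_autLang noStep,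
      extendableLang_autLang noStep exists_noStep_to exists_noStep_from⟩
  -- `TangentAnalytic w` unfolds to `w ∈ desubClosure (autLang noStep)`.
  refine ⟨factorialLang_desubClosure hbase.1, fun w hw => ?_⟩
  obtain ⟨⟨a, ha⟩, b, hb⟩ := extendableLang_desubClosure hbase.2 w hw
  exact ⟨a, b, ha, hb⟩
end

section
/- The number of 1-balanced binary words of length n equals 1 + Σ_{i=1}^{n} (n − i + 1)·φ(i) = 1 + Σ_{i=1}^{n} Σ_{j=1}^{i} φ(j), where φ is Euler's totient function. -/
/-!
Every balanced word `w` has a balanced extension `wb`, so the number `s n` of balanced words of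
length `n` satisfies `s (n + 1) = s n + r n`, where `r n` counts the right special words (`w0` and
`w1` both balanced). Reversal turns them into the left special words, and `0w`, `1w` are both
balanced exactly when `g k = |0w[:k]|₁` is quasi-additive: `g a + g b ≤ g (a + b) ≤ g a + g b + 1`.
A Euclid-style descent shows that such a `g` equals `k ↦ ⌊k p / q⌋`, where `p / q` maximises
`g k / k`; so the left special words of length `n` correspond to the reduced fractions
`p / q ∈ [0, 1)` with `q ≤ n + 1`, and `r n = ∑_{q ≤ n + 1} φ q`.
-/

namespace BalancedWord

variable {k : ℕ} {w : List Bool}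

theorem of_isInfix {u : List Bool} (hw : BalancedWord k w) (hu : u <:+: w) : BalancedWord k u :=
  fun _ _ hx hy hl => hw _ _ (hx.trans hu) (hy.trans hu) hl

theorem nil : BalancedWord k [] := by
  intro u v hu hv _
  simp [List.infix_nil.mp hu, List.infix_nil.mp hv]

theorem reverse (hw : BalancedWord k w) : BalancedWord k w.reverse := by
  intro u v hu hv hl
  have hu' : u.reverse <:+: w := by simpa using List.reverse_infix.mpr hu
  have hv' : v.reverse <:+: w := by simpa using List.reverse_infix.mpr hv
  simpa [List.count_reverse] using hw _ _ hu' hv' (by simpa using hl)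

end BalancedWord

namespace BalancedWords

variable {k : ℕ} {w : List Bool}

def prefixOnes (w : List Bool) (i : ℕ) : ℕ := (w.take i).count true

theorem prefixOnes_add (w : List Bool) (i ℓ : ℕ) :
    prefixOnes w (i + ℓ) = prefixOnes w i + ((w.drop i).take ℓ).count true := by
  rw [prefixOnes, prefixOnes, List.take_add, List.count_append]

theorem prefixOnes_succ {i : ℕ} (h : i < w.length) :
    prefixOnes w (i + 1) = prefixOnes w i + w[i].toNat := by
  rw [prefixOnes, prefixOnes, ← List.take_concat_get h, List.concat_eq_append,
    List.count_append]
  cases w[i] <;> rfl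

theorem prefixOnes_cons (b : Bool) (w : List Bool) (i : ℕ) :
    prefixOnes (b :: w) (i + 1) = b.toNat + prefixOnes w i := by
  cases b <;> simp [prefixOnes, Nat.add_comm]

theorem prefixOnes_append_singleton_of_le (b : Bool) {i : ℕ} (h : i ≤ w.length) :
    prefixOnes (w ++ [b]) i = prefixOnes w i := by
  rw [prefixOnes, List.take_append_of_le_length h, prefixOnes]

theorem prefixOnes_append_singleton_length (w : List Bool) (b : Bool) :
    prefixOnes (w ++ [b]) (w.length + 1) = prefixOnes w w.length + b.toNat := by
  rw [prefixOnes_succ (by simp), prefixOnes_append_singleton_of_le b le_rfl]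
  simp

theorem eq_of_prefixOnes_eq {u v : List Bool} (hl : u.length = v.length)
    (h : ∀ i ≤ u.length, prefixOnes u i = prefixOnes v i) : u = v := by
  refine List.ext_getElem hl fun i hu hv => ?_
  have := h (i + 1) hu
  rw [prefixOnes_succ hu, prefixOnes_succ hv, h i hu.le, Nat.add_left_cancel_iff] at this
  revert this
  cases u[i] <;> cases v[i] <;> simp

theorem exists_prefixOnes_of_infix {u : List Bool} (h : u <:+: w) :
    ∃ i, i + u.length ≤ w.length ∧
      prefixOnes w (i + u.length) = prefixOnes w i + u.count true := by
  obtain ⟨s, t, rfl⟩ := h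
  refine ⟨s.length, by simp, ?_⟩
  simp [prefixOnes, List.take_add, List.count_append]

/-- The balance condition on the windows `[i, i + ℓ)` of a word with prefix counts `f`, written
without subtraction. -/
def IsBalancedCount (k : ℕ) (f : ℕ → ℕ) (n : ℕ) : Prop :=
  ∀ i j ℓ, i + ℓ ≤ n → j + ℓ ≤ n → f (i + ℓ) + f j ≤ f (j + ℓ) + f i + k

theorem balancedWord_iff : BalancedWord k w ↔ IsBalancedCount k (prefixOnes w) w.length := by
  constructor
  · intro hw i j ℓ hi hj
    have hwin : ∀ i, (w.drop i).take ℓ <:+: w := fun i =>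
      (List.take_prefix ℓ _).isInfix.trans (List.drop_suffix i w).isInfix
    have hlen : ∀ i, i + ℓ ≤ w.length → ((w.drop i).take ℓ).length = ℓ := fun i h => by
      rw [List.length_take, List.length_drop]; omega
    have := abs_sub_le_iff.mp (hw _ _ (hwin i) (hwin j) ((hlen i hi).trans (hlen j hj).symm))
    rw [prefixOnes_add, prefixOnes_add]
    omega
  · intro hf u v hu hv hl
    obtain ⟨i, hi, hiu⟩ := exists_prefixOnes_of_infix hu
    obtain ⟨j, hj, hjv⟩ := exists_prefixOnes_of_infix hv
    rw [hl] at hi hiu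
    have := hf i j _ hi hj
    have := hf j i _ hj hi
    rw [abs_sub_le_iff]
    omega

theorem prefixOnes_mono (w : List Bool) {i j : ℕ} (h : i ≤ j) :
    prefixOnes w i ≤ prefixOnes w j := by
  obtain ⟨ℓ, rfl⟩ := Nat.exists_eq_add_of_le h
  rw [prefixOnes_add]
  omega

theorem prefixOnes_succ_le (w : List Bool) (i : ℕ) : prefixOnes w (i + 1) ≤ prefixOnes w i + 1 := by
  have : ((w.drop i).take 1).count true ≤ 1 := List.count_le_length.trans (List.length_take_le _ _)
  rw [prefixOnes_add]
  omega

theorem IsBalancedCount.extend {n : ℕ} {f g : ℕ → ℕ} (hf : IsBalancedCount k f n)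
    (hfg : ∀ i ≤ n, g i = f i)
    (hsuf : ∀ a c m, 1 ≤ m → a + m = n + 1 → c + m ≤ n →
      g (n + 1) + f c ≤ f (c + m) + f a + k ∧ f (c + m) + f a ≤ g (n + 1) + f c + k) :
    IsBalancedCount k g (n + 1) := by
  intro i j ℓ hi hj
  rcases Nat.eq_zero_or_pos ℓ with rfl | hℓ
  · simp only [Nat.add_zero]; omega
  rcases (show i + ℓ ≤ n ∨ i + ℓ = n + 1 by omega) with hi | hi <;>
    rcases (show j + ℓ ≤ n ∨ j + ℓ = n + 1 by omega) with hj | hj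
  · rw [hfg _ hi, hfg _ hj, hfg i (by omega), hfg j (by omega)]
    exact hf i j ℓ hi hj
  · rw [hj, hfg _ hi, hfg i (by omega), hfg j (by omega)]
    exact (hsuf j i ℓ hℓ hj hi).2
  · rw [hi, hfg _ hj, hfg i (by omega), hfg j (by omega)]
    exact (hsuf i j ℓ hℓ hi hj).1
  · obtain rfl : i = j := by omega
    omega

theorem exists_balancedWord_append (hw : BalancedWord 1 w) :
    ∃ b, BalancedWord 1 (w ++ [b]) := by
  set n := w.length
  set f := prefixOnes w
  have hf : IsBalancedCount 1 f n := balancedWord_iff.mp hw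
  have violation : ∀ b, ¬ BalancedWord 1 (w ++ [b]) → ∃ a c m, 1 ≤ m ∧ a + m = n + 1 ∧
      c + m ≤ n ∧ ¬ (f n + b.toNat + f c ≤ f (c + m) + f a + 1 ∧
        f (c + m) + f a ≤ f n + b.toNat + f c + 1) := by
    intro b hb
    by_contra! h
    refine hb (balancedWord_iff.mpr ?_)
    rw [List.length_append, List.length_singleton]
    refine hf.extend (fun i hi => prefixOnes_append_singleton_of_le b hi) ?_
    rw [prefixOnes_append_singleton_length]
    exact h
  by_contra! hnot
  obtain ⟨a, c, m, hm, ha, hc, h0⟩ := violation false (hnot false)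
  obtain ⟨a', c', m', hm', ha', hc', h1⟩ := violation true (hnot true)
  -- Appending `0` can only make a suffix too light, appending `1` only too heavy.
  have suffix0_light : f n + f c + 2 ≤ f (c + m) + f a := by
    have hbal := hf a c (m - 1) (by omega) (by omega)
    have : f (c + (m - 1)) ≤ f (c + m) := prefixOnes_mono w (by omega)
    rw [show a + (m - 1) = n by omega] at hbal
    simp only [Bool.toNat_false] at h0
    omega
  have suffix1_heavy : f (c' + m') + f a' + 1 ≤ f n + f c' := by
    have hbal := hf c' a' (m' - 1) (by omega) (by omega)
    have : f (c' + m') ≤ f (c' + (m' - 1)) + 1 := by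
      simpa [show c' + (m' - 1) + 1 = c' + m' by omega] using prefixOnes_succ_le w (c' + (m' - 1))
    rw [show a' + (m' - 1) = n by omega] at hbal
    simp only [Bool.toNat_true] at h1
    omega
  -- Compare the two violating pairs of windows by cutting the longer ones.
  rcases le_or_gt m m' with hle | hlt
  · have h₁ := hf a' c' (m' - m) (by omega) (by omega)
    have h₂ := hf c (c' + (m' - m)) m (by omega) (by omega)
    rw [show a' + (m' - m) = a by omega] at h₁
    rw [show c' + (m' - m) + m = c' + m' by omega] at h₂
    omega
  · have h₁ := hf c a (m - m') (by omega) (by omega)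
    have h₂ := hf (c + (m - m')) c' m' (by omega) (by omega)
    rw [show a + (m - m') = a' by omega] at h₁
    rw [show c + (m - m') + m' = c + m by omega] at h₂
    omega

/-- Taking `a = b = 0` forces `g 0 = 0`. -/
def QuasiAdditive (g : ℕ → ℕ) (N : ℕ) : Prop :=
  ∀ a b, a + b ≤ N → g a + g b ≤ g (a + b) ∧ g (a + b) ≤ g a + g b + 1

theorem quasiAdditive_mul_div (p q N : ℕ) : QuasiAdditive (fun k => k * p / q) N :=
  fun a b _ => by
    dsimp only
    rw [Nat.add_mul]
    exact ⟨Nat.div_add_div_le_add_div, Nat.add_div_le_div_add_div_add_one _ _ _⟩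

theorem balancedWord_cons_iff_quasiAdditive :
    BalancedWord 1 (false :: w) ∧ BalancedWord 1 (true :: w) ↔
      QuasiAdditive (prefixOnes (false :: w)) (w.length + 1) := by
  simp only [balancedWord_iff, List.length_cons]
  set F := prefixOnes (false :: w)
  have hF0 : F 0 = 0 := rfl
  have hT : ∀ x, prefixOnes (true :: w) x = F x + min x 1 := by
    rintro (_ | x)
    · rfl
    · simp [F, prefixOnes_cons, Nat.add_comm]
  constructor
  · rintro ⟨h0, h1⟩ a b hab
    rcases a.eq_zero_or_pos with rfl | ha
    · simp [hF0]
    rcases b.eq_zero_or_pos with rfl | hb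
    · simp [hF0]
    have h₁ := h0 a 0 b (by omega) (by omega)
    have h₂ := h1 0 a b (by omega) (by omega)
    rw [Nat.zero_add] at h₁ h₂
    rw [hT, hT, hT, hT] at h₂
    omega
  · intro hQ
    have hF : IsBalancedCount 1 F (w.length + 1) := fun i j ℓ hi hj => by
      have := hQ i ℓ hi
      have := hQ j ℓ hj
      omega
    refine ⟨hF, fun i j ℓ hi hj => ?_⟩
    rw [hT, hT, hT, hT]
    rcases i.eq_zero_or_pos with rfl | hi0
    · have := hQ j ℓ hj
      rw [Nat.zero_add]
      omega
    · have := hF i j ℓ hi hj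
      omega

section QuasiAdditive

variable {g : ℕ → ℕ} {N : ℕ}

theorem QuasiAdditive.congr {g' : ℕ → ℕ} (hg : QuasiAdditive g N)
    (h : ∀ k ≤ N, g k = g' k) : QuasiAdditive g' N := fun a b hab => by
  rw [← h a (by omega), ← h b (by omega), ← h (a + b) hab]
  exact hg a b hab

/-- `g j / j < (g k + 1) / k`, by Euclid-style descent on `j + k`. -/
theorem QuasiAdditive.mul_lt_mul_succ (hg : QuasiAdditive g N) {j k : ℕ} (hj : 1 ≤ j)
    (hk : 1 ≤ k) (hjN : j ≤ N) (hkN : k ≤ N) : k * g j < j * (g k + 1) := by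
  induction hs : j + k using Nat.strong_induction_on generalizing j k with
  | _ s ih =>
    rcases lt_trichotomy j k with hlt | rfl | hlt
    · obtain ⟨d, rfl⟩ := Nat.exists_eq_add_of_le hlt.le
      have hsup := (hg j d hkN).1
      have := ih (j + d) (by omega) hj (by omega) hjN (by omega) rfl
      nlinarith
    · nlinarith
    · obtain ⟨d, rfl⟩ := Nat.exists_eq_add_of_le hlt.le
      have hsub := (hg k d hjN).2
      have := ih (d + k) (by omega) (by omega) hk (by omega) hkN rfl
      nlinarith

theorem QuasiAdditive.exists_eq_mul_div (hg : QuasiAdditive g N) (hN : 1 ≤ N) (h1 : g 1 = 0) :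
    ∃ p q, p < q ∧ q ≤ N ∧ p.Coprime q ∧ ∀ k ≤ N, g k = k * p / q := by
  obtain ⟨q, hq, hmax⟩ := Finset.exists_max_image (Finset.Icc 1 N) (fun k => (g k : ℚ) / k)
    ⟨1, Finset.mem_Icc.mpr ⟨le_rfl, hN⟩⟩
  rw [Finset.mem_Icc] at hq
  have hslope : ∀ k ≤ N, g k = k * g q / q := by
    intro k hkN
    rcases k.eq_zero_or_pos with rfl | hk
    · simpa using (hg 0 0 (Nat.zero_le N)).1
    refine (Nat.div_eq_of_lt_le ?_ ?_).symm
    · have := hmax k (Finset.mem_Icc.mpr ⟨hk, hkN⟩)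
      rw [div_le_div_iff₀ (by exact_mod_cast hk) (by exact_mod_cast hq.1), mul_comm (g q : ℚ)]
        at this
      exact_mod_cast this
    · have := hg.mul_lt_mul_succ hq.1 hk hq.2 hkN
      linarith
  have hlt : g q < q := by simpa [h1] using hg.mul_lt_mul_succ hq.1 le_rfl hq.2 hN
  set d := (g q).gcd q
  have hd : 0 < d := Nat.gcd_pos_of_pos_right _ (by omega)
  refine ⟨g q / d, q / d, Nat.div_lt_div_of_lt_of_dvd (Nat.gcd_dvd_right _ _) hlt,
    (Nat.div_le_self _ _).trans hq.2, Nat.coprime_div_gcd_div_gcd hd, fun k hk => ?_⟩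
  rw [hslope k hk, ← Nat.mul_div_mul_left (k * (g q / d)) (q / d) hd,
    Nat.mul_div_cancel' (Nat.gcd_dvd_right _ _), Nat.mul_left_comm,
    Nat.mul_div_cancel' (Nat.gcd_dvd_left _ _)]

end QuasiAdditive

/-- `⟨q, p⟩` encodes the reduced fraction `p / q ∈ [0, 1)` with denominator `q ≤ n + 1`. -/
def fareyPairs (n : ℕ) : Finset ((_ : ℕ) × ℕ) :=
  (Finset.Icc 1 (n + 1)).sigma fun q => (Finset.range q).filter q.Coprime

theorem card_fareyPairs (n : ℕ) :
    (fareyPairs n).card = ∑ q ∈ Finset.Icc 1 (n + 1), q.totient := by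
  rw [fareyPairs, Finset.card_sigma]
  exact Finset.sum_congr rfl fun q _ => (Nat.totient_eq_card_coprime q).symm

section MechanicalWord

/-- Letter `j` is `⌊(j + 2)p/q⌋ - ⌊(j + 1)p/q⌋`, so that `0 :: mechanicalWord n p q` has the
prefix counts `⌊kp/q⌋`. -/
def mechanicalWord (n p q : ℕ) : List Bool :=
  (List.range n).map fun j => decide ((j + 1) * p / q < (j + 2) * p / q)

variable {n p q : ℕ}

@[simp]
theorem length_mechanicalWord : (mechanicalWord n p q).length = n := by
  simp [mechanicalWord]

theorem prefixOnes_mechanicalWord (hpq : p < q) {m : ℕ} (hm : m ≤ n) :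
    prefixOnes (mechanicalWord n p q) m = (m + 1) * p / q := by
  induction m with
  | zero => simp [prefixOnes, Nat.div_eq_of_lt hpq]
  | succ m ih =>
    rw [prefixOnes_succ (by rw [length_mechanicalWord]; omega), ih (by omega)]
    have hstep := quasiAdditive_mul_div p q (m + 2) (m + 1) 1 (by omega)
    simp only [Nat.one_mul, Nat.div_eq_of_lt hpq, Nat.add_zero] at hstep
    rw [show m + 1 + 1 = m + 2 from rfl] at hstep ⊢
    by_cases h : (m + 1) * p / q < (m + 2) * p / q <;>
      simp only [mechanicalWord, List.getElem_map, List.getElem_range, h, decide_true,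
        decide_false, Bool.toNat_true, Bool.toNat_false] <;> omega

theorem prefixOnes_false_cons_mechanicalWord (hpq : p < q) {k : ℕ} (hk : k ≤ n + 1) :
    prefixOnes (false :: mechanicalWord n p q) k = k * p / q := by
  rcases k with _ | m
  · simp [prefixOnes]
  · rw [prefixOnes_cons, prefixOnes_mechanicalWord hpq (by omega)]
    simp

theorem mechanicalWord_injOn :
    Set.InjOn (fun x : (_ : ℕ) × ℕ => mechanicalWord n x.2 x.1) (fareyPairs n) := by
  rintro ⟨q, p⟩ hx ⟨q', p'⟩ hy heq
  simp only [fareyPairs, Finset.coe_sigma, Set.mem_sigma_iff, Finset.coe_Icc, Set.mem_Icc,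
    Finset.coe_filter, Finset.mem_range, Set.mem_ofPred_eq] at hx hy heq
  have hfloor : ∀ k ≤ n + 1, k * p / q = k * p' / q' := fun k hk => by
    rw [← prefixOnes_false_cons_mechanicalWord hx.2.1 hk,
      ← prefixOnes_false_cons_mechanicalWord hy.2.1 hk, heq]
  have h₁ : p * q' ≤ q * p' := by
    rw [← Nat.le_div_iff_mul_le (by omega), ← hfloor q hx.1.2, Nat.mul_div_cancel_left _ (by omega)]
  have h₂ : p' * q ≤ q' * p := by
    rw [← Nat.le_div_iff_mul_le (by omega), hfloor q' hy.1.2, Nat.mul_div_cancel_left _ (by omega)]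
  have hcross : p * q' = p' * q := by linarith
  have hqq : q = q' := Nat.dvd_antisymm
    (hx.2.2.dvd_of_dvd_mul_left ⟨p', by rw [hcross, Nat.mul_comm]⟩)
    (hy.2.2.dvd_of_dvd_mul_left ⟨p, by rw [← hcross, Nat.mul_comm]⟩)
  subst hqq
  obtain rfl : p = p' := Nat.eq_of_mul_eq_mul_right (by omega) hcross
  rfl

end MechanicalWord

def balancedWords (n : ℕ) : Set (List Bool) := {w | BalancedWord 1 w ∧ w.length = n}

def consBalanced (b : Bool) (n : ℕ) : Set (List Bool) :=
  {w | BalancedWord 1 (b :: w) ∧ w.length = n}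

def appendBalanced (b : Bool) (n : ℕ) : Set (List Bool) :=
  {w | BalancedWord 1 (w ++ [b]) ∧ w.length = n}

theorem appendBalanced_finite (b : Bool) (n : ℕ) : (appendBalanced b n).Finite :=
  (List.finite_length_eq Bool n).subset fun _ hw => hw.2

theorem consBalanced_inter_eq_image (n : ℕ) :
    consBalanced false n ∩ consBalanced true n =
      (fun x : (_ : ℕ) × ℕ => mechanicalWord n x.2 x.1) '' fareyPairs n := by
  ext w
  simp only [consBalanced, fareyPairs, Set.mem_inter_iff, Set.mem_ofPred_eq, Set.mem_image,
    Finset.coe_sigma, Set.mem_sigma_iff, Finset.coe_Icc, Set.mem_Icc, Finset.coe_filter,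
    Finset.mem_range, Sigma.exists]
  constructor
  · rintro ⟨⟨h0, rfl⟩, h1, -⟩
    obtain ⟨p, q, hpq, hq, hcop, hfloor⟩ :=
      (balancedWord_cons_iff_quasiAdditive.mp ⟨h0, h1⟩).exists_eq_mul_div (by omega) rfl
    refine ⟨q, p, ⟨⟨by omega, hq⟩, hpq, hcop.symm⟩, List.cons_injective (a := false) ?_⟩
    refine eq_of_prefixOnes_eq (by simp) fun k hk => ?_
    simp only [List.length_cons, length_mechanicalWord] at hk
    rw [prefixOnes_false_cons_mechanicalWord hpq hk, hfloor k hk]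
  · rintro ⟨q, p, ⟨-, hpq, -⟩, rfl⟩
    have hQ : QuasiAdditive (prefixOnes (false :: mechanicalWord n p q))
        ((mechanicalWord n p q).length + 1) := by
      rw [length_mechanicalWord]
      exact (quasiAdditive_mul_div p q (n + 1)).congr fun k hk =>
        (prefixOnes_false_cons_mechanicalWord hpq hk).symm
    obtain ⟨h0, h1⟩ := balancedWord_cons_iff_quasiAdditive.mpr hQ
    exact ⟨⟨h0, length_mechanicalWord⟩, h1, length_mechanicalWord⟩

theorem ncard_consBalanced_inter (n : ℕ) :
    (consBalanced false n ∩ consBalanced true n).ncard =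
      ∑ q ∈ Finset.Icc 1 (n + 1), q.totient := by
  rw [consBalanced_inter_eq_image, mechanicalWord_injOn.ncard_image, Set.ncard_coe_finset,
    card_fareyPairs]

theorem image_reverse_appendBalanced (b : Bool) (n : ℕ) :
    List.reverse '' appendBalanced b n = consBalanced b n := by
  ext w
  constructor
  · rintro ⟨v, ⟨hv, rfl⟩, rfl⟩
    exact ⟨by simpa using hv.reverse, v.length_reverse⟩
  · rintro ⟨hw, rfl⟩
    exact ⟨w.reverse, ⟨by simpa using hw.reverse, w.length_reverse⟩, w.reverse_reverse⟩

theorem ncard_appendBalanced_inter (n : ℕ) :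
    (appendBalanced false n ∩ appendBalanced true n).ncard =
      (consBalanced false n ∩ consBalanced true n).ncard := by
  rw [← image_reverse_appendBalanced, ← image_reverse_appendBalanced,
    ← Set.image_inter List.reverse_injective, Set.ncard_image_of_injective _ List.reverse_injective]

theorem balancedWords_succ (n : ℕ) :
    balancedWords (n + 1) =
      (· ++ [false]) '' appendBalanced false n ∪ (· ++ [true]) '' appendBalanced true n := by
  ext v
  constructor
  · rintro ⟨hv, hl⟩
    obtain rfl | ⟨u, b, rfl⟩ := v.eq_nil_or_concat'
    · simp at hl
    have hu : u.length = n := by simpa using hl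
    cases b
    · exact Or.inl ⟨u, ⟨hv, hu⟩, rfl⟩
    · exact Or.inr ⟨u, ⟨hv, hu⟩, rfl⟩
  · rintro (⟨u, ⟨hu, rfl⟩, rfl⟩ | ⟨u, ⟨hu, rfl⟩, rfl⟩) <;> exact ⟨hu, by simp⟩

theorem appendBalanced_union (n : ℕ) :
    appendBalanced false n ∪ appendBalanced true n = balancedWords n := by
  ext w
  constructor
  · rintro (⟨hw, hl⟩ | ⟨hw, hl⟩) <;> exact ⟨hw.of_isInfix (List.prefix_append _ _).isInfix, hl⟩
  · rintro ⟨hw, hl⟩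
    obtain ⟨_ | _, hb⟩ := exists_balancedWord_append hw
    · exact Or.inl ⟨hb, hl⟩
    · exact Or.inr ⟨hb, hl⟩

theorem ncard_balancedWords_succ (n : ℕ) :
    (balancedWords (n + 1)).ncard =
      (balancedWords n).ncard + (appendBalanced false n ∩ appendBalanced true n).ncard := by
  have hdisj : Disjoint ((· ++ [false]) '' appendBalanced false n)
      ((· ++ [true]) '' appendBalanced true n) := by
    refine Set.disjoint_left.mpr ?_
    rintro _ ⟨u, -, rfl⟩ ⟨v, -, h⟩
    simpa using congrArg List.getLast? h
  rw [balancedWords_succ, Set.ncard_union_eq hdisj ((appendBalanced_finite _ _).image _)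
      ((appendBalanced_finite _ _).image _),
    Set.ncard_image_of_injective _ (List.append_left_injective _),
    Set.ncard_image_of_injective _ (List.append_left_injective _), ← appendBalanced_union]
  exact (Set.ncard_union_add_ncard_inter _ _ (appendBalanced_finite _ _)
    (appendBalanced_finite _ _)).symm

theorem ncard_balancedWords (n : ℕ) :
    (balancedWords n).ncard = 1 + ∑ i ∈ Finset.Icc 1 n, ∑ j ∈ Finset.Icc 1 i, j.totient := by
  induction n with
  | zero =>
    have : balancedWords 0 = {[]} := by
      ext w
      simp only [balancedWords, Set.mem_ofPred_eq, List.length_eq_zero_iff,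
        Set.mem_singleton_iff]
      exact ⟨And.right, fun h => ⟨h ▸ BalancedWord.nil, h⟩⟩
    simp [this]
  | succ n ih =>
    rw [ncard_balancedWords_succ, ih, ncard_appendBalanced_inter, ncard_consBalanced_inter,
      Finset.sum_Icc_succ_top (b := n) (by omega) fun i => ∑ j ∈ Finset.Icc 1 i, j.totient,
      Nat.add_assoc]

end BalancedWords

theorem sum_Icc_sum_Icc_eq_sum_nsmul {M : Type*} [AddCommMonoid M] (f : ℕ → M) (n : ℕ) :
    ∑ i ∈ Finset.Icc 1 n, ∑ j ∈ Finset.Icc 1 i, f j =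
      ∑ j ∈ Finset.Icc 1 n, (n - j + 1) • f j := by
  rw [Finset.sum_comm' (t' := Finset.Icc 1 n) (s' := fun j => Finset.Icc j n)
    (fun i j => by simp only [Finset.mem_Icc]; omega)]
  refine Finset.sum_congr rfl fun j hj => ?_
  rw [Finset.sum_const, Nat.card_Icc, Nat.sub_add_comm (Finset.mem_Icc.mp hj).2]

/-- the number of 1-balanced words of length `n` equals
`1 + ∑_{i=1}^{n} (n − i + 1)·φ(i) = 1 + ∑_{i=1}^{n} ∑_{j=1}^{i} φ(j)`. -/
theorem balanced_complexity (n : ℕ) :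
    Set.ncard {w : List Bool | BalancedWord 1 w ∧ w.length = n} =
        1 + ∑ i ∈ Finset.Icc 1 n, (n - i + 1) * Nat.totient i ∧
    Set.ncard {w : List Bool | BalancedWord 1 w ∧ w.length = n} =
        1 + ∑ i ∈ Finset.Icc 1 n, ∑ j ∈ Finset.Icc 1 i, Nat.totient j := by
  have h := BalancedWords.ncard_balancedWords n
  refine ⟨h.trans ?_, h⟩
  simp only [sum_Icc_sum_Icc_eq_sum_nsmul, smul_eq_mul]
end

section
/- Let L be a nonempty factorial and extendable language of binary words. Then for every n ≥ 0, s_{n+1}(L) − s_n(L) = sb_n(L) − wb_n(L), where s_n(L) = p_{n+1}(L) − p_n(L). -/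
/-!
Count the words of length `n + 1` of `L` by their prefix (resp. suffix) of length `n`, and those of
length `n + 2` by their central factor of length `n`: then `s_{n+1} - s_n` is the sum, over the
words `w ∈ L` of length `n`, of `e(w) - l(w) - r(w) + 1`, where `l`, `r`, `e` count the left, right
and two-sided extensions of `w`. In a factorial extendable language `1 ≤ l, r ≤ 2` and
`max l r ≤ e ≤ l * r`, so this term vanishes unless `w` is bispecial, where it is `e - 3`.
-/

open Finset

noncomputable section

open scoped Classical

namespace BinaryLanguage

variable {L : Set (List Bool)}

def words (L : Set (List Bool)) (n : ℕ) : Finset (List Bool) :=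
  (List.finite_length_eq Bool n).toFinset.filter (· ∈ L)

def leftExt (L : Set (List Bool)) (w : List Bool) : Finset Bool :=
  univ.filter fun a => a :: w ∈ L

def rightExt (L : Set (List Bool)) (w : List Bool) : Finset Bool :=
  univ.filter fun b => w ++ [b] ∈ L

def biExt (L : Set (List Bool)) (w : List Bool) : Finset (Bool × Bool) :=
  univ.filter fun p => p.1 :: (w ++ [p.2]) ∈ L

@[simp]
lemma mem_words {n : ℕ} {w : List Bool} : w ∈ words L n ↔ w ∈ L ∧ w.length = n := by
  simp [words, and_comm]

@[simp] lemma mem_leftExt {w : List Bool} {a : Bool} : a ∈ leftExt L w ↔ a :: w ∈ L := by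
  simp [leftExt]

@[simp] lemma mem_rightExt {w : List Bool} {b : Bool} : b ∈ rightExt L w ↔ w ++ [b] ∈ L := by
  simp [rightExt]

@[simp] lemma mem_biExt {w : List Bool} {p : Bool × Bool} :
    p ∈ biExt L w ↔ p.1 :: (w ++ [p.2]) ∈ L := by
  simp [biExt]

lemma pcount_eq_card_words (L : Set (List Bool)) (n : ℕ) : pcount L n = #(words L n) := by
  rw [pcount, ← Set.ncard_coe_finset]
  congr 1
  ext w
  simp

lemma extCount_eq_card_biExt (L : Set (List Bool)) (w : List Bool) :
    extCount L w = #(biExt L w) := by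
  rw [extCount, ← Set.ncard_coe_finset]
  congr 1
  ext p
  simp

lemma ncard_length_eq_card_filter_words {P : List Bool → Prop} (hP : ∀ w, P w → w ∈ L) (n : ℕ) :
    Set.ncard {w | P w ∧ w.length = n} = #((words L n).filter P) := by
  rw [← Set.ncard_coe_finset]
  congr 1
  ext w
  simp only [Set.mem_ofPred_eq, coe_filter, mem_words]
  exact ⟨fun h => ⟨⟨hP w h.1, h.2⟩, h.1⟩, fun h => ⟨h.2, h.1.2⟩⟩

lemma sb_eq_card_filter_words (L : Set (List Bool)) (n : ℕ) :
    sb L n = #((words L n).filter (StrongBispecial L)) :=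
  ncard_length_eq_card_filter_words (fun _ h => h.1.1) n

lemma wb_eq_card_filter_words (L : Set (List Bool)) (n : ℕ) :
    wb L n = #((words L n).filter (WeakBispecial L)) :=
  ncard_length_eq_card_filter_words (fun _ h => h.1.1) n

lemma card_words_succ_eq_sum_card_rightExt (hf : FactorialLang L) (n : ℕ) :
    #(words L (n + 1)) = ∑ w ∈ words L n, #(rightExt L w) := by
  rw [← card_sigma]
  refine (card_nbij (fun p => p.1 ++ [p.2]) ?_ ?_ ?_).symm
  · rintro ⟨w, b⟩ h
    simp_all
  · rintro ⟨w, b⟩ - ⟨w', b'⟩ - h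
    simp_all
  · intro u hu
    obtain ⟨huL, hlen⟩ := mem_words.1 hu
    obtain rfl | ⟨w, b, rfl⟩ := u.eq_nil_or_concat'
    · simp at hlen
    · exact ⟨⟨w, b⟩, by simp_all [hf _ huL w (List.prefix_append w [b]).isInfix], rfl⟩

lemma card_words_succ_eq_sum_card_leftExt (hf : FactorialLang L) (n : ℕ) :
    #(words L (n + 1)) = ∑ w ∈ words L n, #(leftExt L w) := by
  rw [← card_sigma]
  refine (card_nbij (fun p => p.2 :: p.1) ?_ ?_ ?_).symm
  · rintro ⟨w, a⟩ h
    simp_all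
  · rintro ⟨w, a⟩ - ⟨w', a'⟩ - h
    simp_all
  · rintro (_ | ⟨a, w⟩) hu
    · simp at hu
    · obtain ⟨huL, hlen⟩ := mem_words.1 hu
      exact ⟨⟨w, a⟩, by simp_all [hf _ huL w (List.suffix_cons a w).isInfix], rfl⟩

lemma card_words_add_two_eq_sum_card_biExt (hf : FactorialLang L) (n : ℕ) :
    #(words L (n + 2)) = ∑ w ∈ words L n, #(biExt L w) := by
  rw [← card_sigma]
  refine (card_nbij (fun p => p.2.1 :: (p.1 ++ [p.2.2])) ?_ ?_ ?_).symm
  · rintro ⟨w, a, b⟩ h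
    simp_all
  · rintro ⟨w, a, b⟩ - ⟨w', a', b'⟩ - h
    simp_all
  · rintro (_ | ⟨a, v⟩) hu
    · simp at hu
    · obtain ⟨huL, hlen⟩ := mem_words.1 hu
      obtain rfl | ⟨w, b, rfl⟩ := v.eq_nil_or_concat'
      · simp at hlen
      · have hw : w ∈ L := hf _ huL w ⟨[a], [b], by simp⟩
        exact ⟨⟨w, a, b⟩, by simp_all, rfl⟩

lemma biExt_subset_product (hf : FactorialLang L) (w : List Bool) :
    biExt L w ⊆ leftExt L w ×ˢ rightExt L w := by
  rintro ⟨a, b⟩ h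
  rw [mem_biExt] at h
  simp only [mem_product, mem_leftExt, mem_rightExt]
  exact ⟨hf _ h _ ⟨[], [b], by simp⟩, hf _ h _ ⟨[a], [], by simp⟩⟩

lemma card_biExt_le_mul (hf : FactorialLang L) (w : List Bool) :
    #(biExt L w) ≤ #(leftExt L w) * #(rightExt L w) :=
  card_product (leftExt L w) (rightExt L w) ▸ card_le_card (biExt_subset_product hf w)

lemma leftExt_subset_image_biExt (he : ExtendableLang L) (w : List Bool) :
    leftExt L w ⊆ (biExt L w).image Prod.fst := by
  intro a ha
  obtain ⟨b, hb⟩ := (he _ (mem_leftExt.1 ha)).2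
  exact mem_image.2 ⟨(a, b), mem_biExt.2 hb, rfl⟩

lemma rightExt_subset_image_biExt (he : ExtendableLang L) (w : List Bool) :
    rightExt L w ⊆ (biExt L w).image Prod.snd := by
  intro b hb
  obtain ⟨a, ha⟩ := (he _ (mem_rightExt.1 hb)).1
  exact mem_image.2 ⟨(a, b), mem_biExt.2 ha, rfl⟩

lemma card_leftExt_le_card_biExt (he : ExtendableLang L) (w : List Bool) :
    #(leftExt L w) ≤ #(biExt L w) :=
  (card_le_card (leftExt_subset_image_biExt he w)).trans card_image_le

lemma card_rightExt_le_card_biExt (he : ExtendableLang L) (w : List Bool) :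
    #(rightExt L w) ≤ #(biExt L w) :=
  (card_le_card (rightExt_subset_image_biExt he w)).trans card_image_le

lemma bispecial_iff_card {w : List Bool} (hw : w ∈ L) :
    Bispecial L w ↔ #(leftExt L w) = 2 ∧ #(rightExt L w) = 2 := by
  have h2 : ∀ s : Finset Bool, #s = 2 ↔ false ∈ s ∧ true ∈ s := fun s => by
    rw [← Fintype.card_bool, card_eq_iff_eq_univ, eq_univ_iff_forall, Bool.forall_bool]
  simp only [h2, mem_leftExt, mem_rightExt, Bispecial, hw, true_and, and_assoc]

lemma card_biExt_sub_card_leftExt_sub_card_rightExt_add_one (hf : FactorialLang L)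
    (he : ExtendableLang L) {w : List Bool} (hw : w ∈ L) :
    (#(biExt L w) : ℤ) - #(leftExt L w) - #(rightExt L w) + 1 =
      (if StrongBispecial L w then 1 else 0) - (if WeakBispecial L w then 1 else 0) := by
  obtain ⟨⟨a, ha⟩, ⟨b, hb⟩⟩ := he w hw
  have hl : 0 < #(leftExt L w) := card_pos.2 ⟨a, mem_leftExt.2 ha⟩
  have hr : 0 < #(rightExt L w) := card_pos.2 ⟨b, mem_rightExt.2 hb⟩
  have hl2 : #(leftExt L w) ≤ 2 := card_le_univ _
  have hr2 : #(rightExt L w) ≤ 2 := card_le_univ _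
  have hle := card_biExt_le_mul hf w
  have hgl := card_leftExt_le_card_biExt he w
  have hgr := card_rightExt_le_card_biExt he w
  simp only [StrongBispecial, WeakBispecial, bispecial_iff_card hw, extCount_eq_card_biExt]
  interval_cases #(leftExt L w) <;> interval_cases #(rightExt L w) <;> split_ifs <;> omega

end BinaryLanguage

end

open BinaryLanguage in
theorem second_difference_bispecial_general (L : Set (List Bool))
    (hf : FactorialLang L) (he : ExtendableLang L) (n : ℕ) :
    ((pcount L (n + 2) : ℤ) - (pcount L (n + 1) : ℤ)) -
        ((pcount L (n + 1) : ℤ) - (pcount L n : ℤ)) =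
      (sb L n : ℤ) - (wb L n : ℤ) := by
  have hlocal := sum_congr (rfl : words L n = _) fun w hw =>
    card_biExt_sub_card_leftExt_sub_card_rightExt_add_one hf he (mem_words.1 hw).1
  simp only [sum_add_distrib, sum_sub_distrib, sum_boole, sum_const, nsmul_eq_mul, mul_one,
    ← Nat.cast_sum, ← card_words_add_two_eq_sum_card_biExt hf,
    ← card_words_succ_eq_sum_card_leftExt hf, ← card_words_succ_eq_sum_card_rightExt hf] at hlocal
  rw [pcount_eq_card_words, pcount_eq_card_words, pcount_eq_card_words,
    sb_eq_card_filter_words, wb_eq_card_filter_words]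
  linarith

/-- for a nonempty factorial extendable language,
`s_{n+1}(L) − s_n(L) = sb_n(L) − wb_n(L)` where `s_n(L) = p_{n+1}(L) − p_n(L)`. -/
theorem second_difference_bispecial (L : Set (List Bool)) (hne : L.Nonempty)
    (hf : FactorialLang L) (he : ExtendableLang L) (n : ℕ) :
    ((pcount L (n + 2) : ℤ) - (pcount L (n + 1) : ℤ)) -
        ((pcount L (n + 1) : ℤ) - (pcount L n : ℤ)) =
      (sb L n : ℤ) - (wb L n : ℤ) :=
  second_difference_bispecial_general L hf he n
end

section
/- Let L be a factorial and extendable language of binary words containing both letters 0 and 1. Then for every n ≥ 0, p_n(L) = 1 + n + Σ_{i=0}^{n−1} Σ_{j=0}^{i−1} (sb_j(L) − wb_j(L)). -/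
/-! Let `s_n` count the right special words of length `n`. Every word of `L` has one or two
right extensions, two exactly when it is right special, so `p_{n+1} - p_n = s_n`. A right
special word `v` that is not bispecial has exactly one right special left extension `av`; a
bispecial one has `extCount v - 2` of them, that is 0, 1 or 2 according as `v` is weak, neutral
or strong. Hence `s_{n+1} - s_n = sb_n - wb_n`, and summing twice from `p_0 = s_0 = 1` gives
the formula. -/

namespace FactorialLang

variable {L : Set (List Bool)}

theorem mem_of_append_left (hf : FactorialLang L) {u v : List Bool} (h : u ++ v ∈ L) :
    u ∈ L :=
  hf _ h u (List.prefix_append u v).isInfix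

theorem mem_of_cons (hf : FactorialLang L) {a : Bool} {v : List Bool} (h : a :: v ∈ L) :
    v ∈ L :=
  hf _ h v (List.suffix_cons a v).isInfix

end FactorialLang

noncomputable def words (n : ℕ) : Finset (List Bool) :=
  (List.finite_length_eq Bool n).toFinset

@[simp]
theorem mem_words {n : ℕ} {w : List Bool} : w ∈ words n ↔ w.length = n := by
  simp [words]

theorem sum_words_succ_append {M : Type*} [AddCommMonoid M] (f : List Bool → M) (n : ℕ) :
    ∑ w ∈ words (n + 1), f w = ∑ v ∈ words n, ∑ b : Bool, f (v ++ [b]) := by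
  rw [← Finset.sum_product' (f := fun v b => f (v ++ [b]))]
  refine Finset.sum_nbij' (fun w => (w.dropLast, w.getLastD false)) (fun p => p.1 ++ [p.2])
    ?_ ?_ ?_ ?_ ?_
  · intro w hw
    simp_all
  · intro p hp
    simp_all
  · intro w hw
    obtain rfl | ⟨v, b, rfl⟩ := w.eq_nil_or_concat' <;> simp_all
  · intro p _
    simp
  · intro w hw
    obtain rfl | ⟨v, b, rfl⟩ := w.eq_nil_or_concat' <;> simp_all

theorem sum_words_succ_cons {M : Type*} [AddCommMonoid M] (f : List Bool → M) (n : ℕ) :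
    ∑ w ∈ words (n + 1), f w = ∑ v ∈ words n, ∑ a : Bool, f (a :: v) := by
  rw [← Finset.sum_product' (f := fun v a => f (a :: v))]
  refine Finset.sum_nbij' (fun w => (w.tail, w.headD false)) (fun p => p.2 :: p.1)
    ?_ ?_ ?_ ?_ ?_
  · intro w hw
    simp_all
  · intro p hp
    simp_all
  · rintro (_ | ⟨a, v⟩) hw
    · simp at hw
    · simp
  · intro p _
    simp
  · rintro (_ | ⟨a, v⟩) hw
    · simp at hw
    · simp

theorem ncard_setOf_and_length_eq (P : List Bool → Prop) [DecidablePred P] (n : ℕ) :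
    {w | P w ∧ w.length = n}.ncard = ∑ w ∈ words n, if P w then 1 else 0 := by
  rw [Finset.sum_boole, Nat.cast_id, ← Set.ncard_coe_finset]
  congr 1
  ext w
  simp [and_comm]

def RightSpecial (L : Set (List Bool)) (v : List Bool) : Prop :=
  v ++ [false] ∈ L ∧ v ++ [true] ∈ L

noncomputable def rsCount (L : Set (List Bool)) (n : ℕ) : ℕ :=
  {w | RightSpecial L w ∧ w.length = n}.ncard

section Counting

open Classical

variable {L : Set (List Bool)}

theorem Bispecial.rightSpecial {v : List Bool} (h : Bispecial L v) : RightSpecial L v :=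
  ⟨h.2.2.2.1, h.2.2.2.2⟩

theorem sum_ite_append_mem (hf : FactorialLang L) (he : ExtendableLang L) (v : List Bool) :
    (∑ b : Bool, if v ++ [b] ∈ L then 1 else 0) =
      (if v ∈ L then 1 else 0) + if RightSpecial L v then 1 else 0 := by
  by_cases hv : v ∈ L
  · obtain ⟨-, b, hb⟩ := he v hv
    simp only [Fintype.sum_bool, RightSpecial, hv]
    cases b <;> by_cases h0 : v ++ [false] ∈ L <;> by_cases h1 : v ++ [true] ∈ L <;> simp_all
  · have hext (b : Bool) : v ++ [b] ∉ L := fun h => hv (hf.mem_of_append_left h)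
    simp [RightSpecial, hv, hext]

theorem extCount_eq_sum (v : List Bool) :
    extCount L v = ∑ a : Bool, ∑ b : Bool, if a :: v ++ [b] ∈ L then 1 else 0 := by
  rw [extCount, ← Fintype.sum_prod_type' (f := fun a b => if a :: v ++ [b] ∈ L then 1 else 0),
    Finset.sum_boole, Nat.cast_id, ← Set.ncard_coe_finset]
  congr 1
  ext p
  simp

theorem extCount_eq_two_add (hf : FactorialLang L) (he : ExtendableLang L) {v : List Bool}
    (hv : Bispecial L v) :
    extCount L v = 2 + ∑ a : Bool, if RightSpecial L (a :: v) then 1 else 0 := by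
  obtain ⟨-, h0, h1, -⟩ := hv
  simp only [extCount_eq_sum, sum_ite_append_mem hf he, Finset.sum_add_distrib, h0, h1,
    Fintype.sum_bool, if_true]

theorem sum_ite_rightSpecial_cons (hf : FactorialLang L) (he : ExtendableLang L)
    (v : List Bool) :
    (∑ a : Bool, if RightSpecial L (a :: v) then 1 else 0) +
        (if WeakBispecial L v then 1 else 0) =
      (if RightSpecial L v then 1 else 0) + if StrongBispecial L v then 1 else 0 := by
  by_cases hb : Bispecial L v
  · simp only [WeakBispecial, StrongBispecial, hb, hb.rightSpecial, extCount_eq_two_add hf he hb,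
      true_and, if_true]
    rw [Fintype.sum_bool]
    split_ifs <;> omega
  have hw : ¬ WeakBispecial L v := fun h => hb h.1
  have hs : ¬ StrongBispecial L v := fun h => hb h.1
  by_cases hr : RightSpecial L v
  · obtain ⟨a, ha0⟩ := (he _ hr.1).1
    obtain ⟨a', ha1⟩ := (he _ hr.2).1
    have hv : v ∈ L := hf.mem_of_append_left hr.1
    have hav : a :: v ∈ L := hf.mem_of_append_left (u := a :: v) ha0
    have hav' : a' :: v ∈ L := hf.mem_of_append_left (u := a' :: v) ha1
    have hnot : (!a) :: v ∉ L := fun h => hb <| by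
      cases a
      · exact ⟨hv, hav, h, hr.1, hr.2⟩
      · exact ⟨hv, h, hav, hr.1, hr.2⟩
    obtain rfl : a = a' := by
      by_contra hne
      exact hnot (by cases a <;> cases a' <;> simp_all)
    have hra : RightSpecial L (a :: v) := ⟨ha0, ha1⟩
    have hrna : ¬ RightSpecial L ((!a) :: v) := fun h =>
      hnot (hf.mem_of_append_left (u := (!a) :: v) h.1)
    rw [Fintype.sum_bool]
    cases a <;> simp_all
  · have hcons (a : Bool) : ¬ RightSpecial L (a :: v) := fun h =>
      hr ⟨hf.mem_of_cons h.1, hf.mem_of_cons h.2⟩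
    simp [hcons, hr, hw, hs]

theorem pcount_succ (hf : FactorialLang L) (he : ExtendableLang L) (n : ℕ) :
    pcount L (n + 1) = pcount L n + rsCount L n := by
  rw [pcount, pcount, rsCount, ncard_setOf_and_length_eq (· ∈ L), ncard_setOf_and_length_eq,
    ncard_setOf_and_length_eq, sum_words_succ_append, ← Finset.sum_add_distrib]
  exact Finset.sum_congr rfl fun v _ => sum_ite_append_mem hf he v

theorem rsCount_succ_add_wb (hf : FactorialLang L) (he : ExtendableLang L) (n : ℕ) :
    rsCount L (n + 1) + wb L n = rsCount L n + sb L n := by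
  rw [rsCount, rsCount, wb, sb, ncard_setOf_and_length_eq, ncard_setOf_and_length_eq,
    ncard_setOf_and_length_eq, ncard_setOf_and_length_eq, sum_words_succ_cons,
    ← Finset.sum_add_distrib, ← Finset.sum_add_distrib]
  exact Finset.sum_congr rfl fun v _ => sum_ite_rightSpecial_cons hf he v

theorem pcount_zero (hnil : [] ∈ L) : pcount L 0 = 1 := by
  rw [pcount, ← Set.ncard_singleton ([] : List Bool)]
  congr 1
  ext w
  simp only [Set.mem_ofPred_eq, List.length_eq_zero_iff, Set.mem_singleton_iff]
  exact ⟨And.right, fun h => ⟨h ▸ hnil, h⟩⟩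

theorem rsCount_zero (h0 : [false] ∈ L) (h1 : [true] ∈ L) :
    rsCount L 0 = 1 := by
  rw [rsCount, ← Set.ncard_singleton ([] : List Bool)]
  congr 1
  ext w
  simp only [Set.mem_ofPred_eq, List.length_eq_zero_iff, Set.mem_singleton_iff]
  exact ⟨And.right, fun h => ⟨h ▸ ⟨h0, h1⟩, h⟩⟩

theorem pcount_eq_one_add_sum_rsCount (hf : FactorialLang L)
    (he : ExtendableLang L) (hnil : [] ∈ L) (n : ℕ) :
    (pcount L n : ℤ) = 1 + ∑ i ∈ Finset.range n, (rsCount L i : ℤ) := by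
  have := Finset.sum_range_sub (fun i => (pcount L i : ℤ)) n
  simp only [pcount_succ hf he, pcount_zero hnil, Nat.cast_add, Nat.cast_one,
    add_sub_cancel_left] at this
  linarith

theorem rsCount_eq_one_add_sum (hf : FactorialLang L)
    (he : ExtendableLang L) (h0 : [false] ∈ L) (h1 : [true] ∈ L) (n : ℕ) :
    (rsCount L n : ℤ) = 1 + ∑ j ∈ Finset.range n, ((sb L j : ℤ) - (wb L j : ℤ)) := by
  have := Finset.sum_range_sub (fun i => (rsCount L i : ℤ)) n
  have hstep (i : ℕ) : (rsCount L (i + 1) : ℤ) - rsCount L i = sb L i - wb L i := by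
    have := rsCount_succ_add_wb hf he i
    omega
  simp only [hstep, rsCount_zero h0 h1, Nat.cast_one] at this
  linarith

end Counting

/-- for a factorial extendable language containing both letters,
`p_n(L) = 1 + n + ∑_{i=0}^{n−1} ∑_{j=0}^{i−1} (sb_j(L) − wb_j(L))`. -/
theorem complexity_from_bispecials (L : Set (List Bool)) (hf : FactorialLang L)
    (he : ExtendableLang L) (h0 : [false] ∈ L) (h1 : [true] ∈ L) (n : ℕ) :
    (pcount L n : ℤ) =
      1 + n + ∑ i ∈ Finset.range n, ∑ j ∈ Finset.range i,
        ((sb L j : ℤ) - (wb L j : ℤ)) := by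
  rw [pcount_eq_one_add_sum_rsCount hf he (hf.mem_of_cons h0),
    Finset.sum_congr rfl fun i _ => rsCount_eq_one_add_sum hf he h0 h1 i,
    Finset.sum_add_distrib, Finset.sum_const, Finset.card_range, nsmul_one, add_assoc]
end

section
/- Every 1-balanced binary word is tangent analytic. -/
theorem exists_eq_append_cons_of_ne {α : Type*} :
    ∀ {s r : List α}, s ≠ r → s.length = r.length →
      ∃ p a b s' r', a ≠ b ∧ s = p ++ a :: s' ∧ r = p ++ b :: r'
  | [], [], hne, _ => absurd rfl hne
  | a :: s, b :: r, hne, hlen => by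
    by_cases hab : a = b
    · subst hab
      obtain ⟨p, c, d, s', r', hcd, rfl, rfl⟩ :=
        exists_eq_append_cons_of_ne (s := s) (r := r) (by simpa using hne) (by simpa using hlen)
      exact ⟨a :: p, c, d, s', r', hcd, rfl, rfl⟩
    · exact ⟨[], a, b, s, r, hab, rfl, rfl⟩

theorem exists_eq_cons_append_singleton {α : Type*} {l : List α} (hl : 2 ≤ l.length) :
    ∃ a s b, l = a :: (s ++ [b]) := by
  match l, hl with
  | a :: b :: l, _ => exact ⟨a, (b :: l).dropLast, (b :: l).getLast (by simp),
      by rw [List.dropLast_append_getLast]⟩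

theorem infix_of_infix_cons {α : Type*} {a : α} {x l : List α} (h : x <:+: a :: l)
    (hx : x.head? ≠ some a) : x <:+: l := by
  rcases List.infix_cons_iff.1 h with hpre | hinf
  · rcases List.prefix_cons_iff.1 hpre with rfl | ⟨y, rfl, -⟩
    · exact List.nil_infix
    · simp at hx
  · exact hinf

theorem infix_of_infix_concat {α : Type*} {a : α} {x l : List α} (h : x <:+: l ++ [a])
    (hx : x.getLast? ≠ some a) : x <:+: l := by
  rcases List.infix_concat_iff.1 h with hsuf | hinf
  · rcases List.suffix_concat_iff.1 hsuf with rfl | ⟨y, rfl, -⟩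
    · exact List.nil_infix
    · simp at hx
  · exact hinf

theorem infix_map_not_iff {u w : List Bool} : u <:+: w.map not ↔ u.map not <:+: w := by
  constructor <;> intro h <;> simpa [Function.comp_def] using h.map not

theorem exists_infix_of_count_add_two_le {x : List Bool} (n : ℕ) :
    ∀ u v : List Bool, u <:+: x → v <:+: x → u.length = n → v.length = n →
      v.count true + 2 ≤ u.count true →
      ∃ t, false :: (t ++ [false]) <:+: x ∧ true :: (t ++ [true]) <:+: x := by
  -- A shortest such pair is `1s1`, `0r0` with `|s|_1 = |r|_1`. At the first difference of `s`
  -- and `r`, either `1p1` and `0p0` appear, or the tails give a shorter pair `s'1`, `r'0`.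
  induction n using Nat.strong_induction_on with
  | _ n ih =>
  intro u v hu hv hun hvn hc
  have shorter : ∀ u' v' : List Bool, u' <:+: u → v' <:+: v → u'.length = v'.length →
      u'.length < n → v'.count true + 2 ≤ u'.count true →
      ∃ t, false :: (t ++ [false]) <:+: x ∧ true :: (t ++ [true]) <:+: x :=
    fun u' v' hu' hv' hlen hlt hc' =>
      ih _ hlt u' v' (hu'.trans hu) (hv'.trans hv) rfl hlen.symm hc'
  obtain ⟨a, s, a', rfl⟩ := exists_eq_cons_append_singleton (l := u)
    (by have := u.count_le_length (a := true); omega)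
  obtain ⟨b, r, b', rfl⟩ := exists_eq_cons_append_singleton (l := v)
    (by simp at hun hvn ⊢; omega)
  have hlen : s.length = r.length := by simp at hun hvn; omega
  by_cases hpre : (b :: r).count true + 2 ≤ (a :: s).count true
  · exact shorter _ _ ⟨[], [a'], rfl⟩ ⟨[], [b'], rfl⟩ (by simpa using hlen)
      (by simp at hun ⊢; omega) hpre
  by_cases hsuf : (r ++ [b']).count true + 2 ≤ (s ++ [a']).count true
  · exact shorter _ _ ⟨[a], [], by simp⟩ ⟨[b], [], by simp⟩ (by simpa using hlen)
      (by simp at hun ⊢; omega) hsuf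
  have hends : a = true ∧ b = false ∧ a' = true ∧ b' = false := by
    simp only [List.count_cons, List.count_append] at hc hpre hsuf
    cases a <;> cases b <;> cases a' <;> cases b' <;> simp at hc hpre hsuf ⊢ <;> omega
  obtain ⟨rfl, rfl, rfl, rfl⟩ := hends
  have hcount : s.count true = r.count true := by
    simp at hc hpre hsuf
    omega
  by_cases hsr : s = r
  · exact ⟨s, hsr ▸ hv, hu⟩
  obtain ⟨p, c, d, s', r', hcd, rfl, rfl⟩ := exists_eq_append_cons_of_ne hsr hlen
  cases c <;> cases d <;> simp only [ne_eq, not_true_eq_false] at hcd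
  · refine shorter (s' ++ [true]) (r' ++ [false]) ⟨true :: (p ++ [false]), [], by simp⟩
      ⟨false :: (p ++ [true]), [], by simp⟩ (by simp at hlen ⊢; omega)
      (by simp at hun ⊢; omega) ?_
    simp at hcount ⊢
    omega
  · exact ⟨p, List.IsInfix.trans ⟨[], r' ++ [false], by simp⟩ hv,
      List.IsInfix.trans ⟨[], s' ++ [true], by simp⟩ hu⟩

theorem exists_infix_of_not_balancedWord {x : List Bool} (h : ¬ BalancedWord 1 x) :
    ∃ t, false :: (t ++ [false]) <:+: x ∧ true :: (t ++ [true]) <:+: x := by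
  simp only [BalancedWord, not_forall, abs_le, not_and_or, not_le] at h
  obtain ⟨u, v, hu, hv, hlen, hlt | hlt⟩ := h
  · exact exists_infix_of_count_add_two_le _ v u hv hu rfl hlen (by push_cast at hlt; omega)
  · exact exists_infix_of_count_add_two_le _ u v hu hv rfl hlen.symm (by push_cast at hlt; omega)

theorem BalancedWord.exists_not_infix {w : List Bool} (hb : BalancedWord 1 w) :
    ∃ c : Bool, ¬ [!c, !c] <:+: w := by
  by_contra! h
  simpa using hb _ _ (h false) (h true) rfl

theorem BalancedWord.map_not {k : ℕ} {w : List Bool} (hb : BalancedWord k w) :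
    BalancedWord k (w.map not) := by
  intro u v hu hv hlen
  have hnot := hb _ _ (infix_map_not_iff.1 hu) (infix_map_not_iff.1 hv) (by simpa using hlen)
  have hcount (l : List Bool) : (l.map not).count true + l.count true = l.length := by
    rw [← l.count_false_add_count_true]
    exact congrArg (· + _) (List.count_map_of_injective l not Bool.not_injective false)
  have hu' := hcount u
  have hv' := hcount v
  rw [abs_le] at hnot ⊢
  constructor <;> omega

theorem pair_infix_of_not_mem {c : Bool} {w : List Bool} (hc : c ∉ w) (hw : 2 ≤ w.length) :
    [!c, !c] <:+: w := by
  match w, hw with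
  | a :: b :: l, _ =>
    simp only [List.mem_cons, not_or] at hc
    exact ⟨[], l, by cases a <;> cases b <;> cases c <;> simp_all⟩

theorem length_delRunAux_le (c d : Bool) (l : List Bool) :
    (delRunAux c d l).length ≤ l.length := by
  induction l generalizing d with
  | nil => rfl
  | cons a l ih => cases d <;> by_cases ha : a = c <;> simp [delRunAux, ha] <;> grind

theorem length_delRun_lt {c : Bool} {l : List Bool} (h : c ∈ l) :
    (delRun c l).length < l.length := by
  induction l with
  | nil => simp at h
  | cons a l ih =>
    by_cases ha : a = c
    · have := length_delRunAux_le c false l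
      simp only [delRun, delRunAux, ha, if_true, List.length_cons] at this ⊢
      omega
    · simpa [delRun, delRunAux, ha] using ih (by simpa [Ne.symm ha] using h)

theorem delRunAux_map_not (c d : Bool) (l : List Bool) :
    delRunAux (!c) d (l.map not) = (delRunAux c d l).map not := by
  induction l generalizing d with
  | nil => rfl
  | cons a l ih => cases d <;> by_cases ha : a = c <;> simp [delRunAux, ha, ih]

theorem desub_delRun {c : Bool} {w : List Bool} (hw : w ≠ []) (h : ¬ [!c, !c] <:+: w) :
    Desub w (delRun c w) := by
  cases c
  · exact ⟨hw, .inl ⟨h, rfl⟩⟩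
  · exact ⟨hw, .inr ⟨h, rfl⟩⟩

/-- The substitution `τ : 0 ↦ 0, 1 ↦ 10`, re-inserting the zeros deleted by `delRun false`. -/
def expandOnes (x : List Bool) : List Bool :=
  x.flatMap fun b => if b then [true, false] else [false]

@[simp]
theorem expandOnes_nil : expandOnes [] = [] := rfl

@[simp]
theorem expandOnes_cons (b : Bool) (x : List Bool) :
    expandOnes (b :: x) = (if b then [true, false] else [false]) ++ expandOnes x := rfl

@[simp]
theorem expandOnes_append (x y : List Bool) :
    expandOnes (x ++ y) = expandOnes x ++ expandOnes y := List.flatMap_append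

theorem count_expandOnes (x : List Bool) : (expandOnes x).count true = x.count true := by
  induction x with
  | nil => rfl
  | cons b x ih => cases b <;> simp [ih]

theorem exists_false_cons_expandOnes_eq_append_false (x : List Bool) :
    ∃ p, false :: expandOnes x = p ++ [false] := by
  rcases List.eq_nil_or_concat x with rfl | ⟨y, b, rfl⟩
  · exact ⟨[], rfl⟩
  · exact ⟨false :: expandOnes y ++ (if b then [true] else []), by cases b <;> simp⟩

theorem false_cons_expandOnes_infix {x v : List Bool} (h : x <:+: v) :
    false :: expandOnes x <:+: false :: expandOnes v := by
  obtain ⟨p, q, rfl⟩ := h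
  obtain ⟨p', hp'⟩ := exists_false_cons_expandOnes_eq_append_false p
  exact ⟨p', expandOnes q, by simp only [expandOnes_append, ← List.cons_append, hp']; simp⟩

/-- The boundary terms: a leading run of zeros loses a zero without following a `1`, and a
final `1` is followed by a zero in the expansion but not in `w`. -/
theorem expandOnes_delRunAux_false (w : List Bool) (h : ¬ [true, true] <:+: w) :
    expandOnes (delRunAux false false w) =
        w ++ (if w.getLast? = some true then [false] else []) ∧
      false :: expandOnes (delRunAux false true w) =
        (if w.head? = some false then [] else [false]) ++ w ++
          (if w.getLast? = some true then [false] else []) := by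
  induction w with
  | nil => simp [delRunAux]
  | cons a w ih =>
    obtain ⟨ih₁, ih₂⟩ := ih fun hw => h (hw.trans (List.suffix_cons a w).isInfix)
    cases a with
    | false =>
      refine ⟨?_, ?_⟩ <;> simp only [delRunAux, if_true]
      · cases w <;> simp_all
      · cases w <;> simp_all
    | true =>
      rcases w with _ | ⟨_ | _, w⟩
      · simp [delRunAux]
      · simp_all [delRunAux]
      · exact absurd (List.infix_append [] [true, true] w) h

theorem true_false_expandOnes_infix_of_infix_delRun {w t : List Bool}
    (hw : ¬ [true, true] <:+: w) (ht : true :: (t ++ [true]) <:+: delRun false w) :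
    true :: false :: (expandOnes t ++ [true]) <:+: w := by
  have hlift : true :: false :: (expandOnes t ++ [true]) <:+:
      false :: expandOnes (true :: (t ++ [true])) := ⟨[false], [false], by simp⟩
  replace hlift := hlift.trans (false_cons_expandOnes_infix ht)
  rw [delRun, (expandOnes_delRunAux_false w hw).2] at hlift
  -- the padding consists of zeros, while the lifted factor begins and ends with `1`
  set pad := if w.getLast? = some true then [false] else [] with hpad
  have hstart : true :: false :: (expandOnes t ++ [true]) <:+: w ++ pad := by
    by_cases hh : w.head? = some false
    · simpa [hh] using hlift
    · rw [if_neg hh, List.append_assoc] at hlift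
      exact infix_of_infix_cons hlift (by simp)
  by_cases hl : w.getLast? = some true
  · rw [hpad, if_pos hl] at hstart
    exact infix_of_infix_concat hstart
      (by rw [← List.cons_append, ← List.cons_append, List.getLast?_concat]; simp)
  · simpa [hpad, hl] using hstart

theorem false_false_expandOnes_infix_of_infix_delRun {w t : List Bool}
    (hw : ¬ [true, true] <:+: w) (ht : false :: (t ++ [false]) <:+: delRun false w) :
    false :: false :: (expandOnes t ++ [false]) <:+: w := by
  have hlift := false_cons_expandOnes_infix ht
  rw [delRun, (expandOnes_delRunAux_false w hw).2] at hlift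
  -- a leading pad forces `w` not to start with `0`, a trailing one forces `w` to end with `1`
  set pad := if w.getLast? = some true then [false] else [] with hpad
  have hstart : false :: false :: (expandOnes t ++ [false]) <:+: w ++ pad := by
    by_cases hh : w.head? = some false
    · simpa [hh] using hlift
    rw [if_neg hh, List.append_assoc] at hlift
    rcases List.infix_cons_iff.1 (by simpa using hlift) with hpre | hinf
    · obtain ⟨u, hu⟩ := hpre
      cases w <;> simp_all
    · exact hinf
  by_cases hl : w.getLast? = some true
  · rw [hpad, if_pos hl] at hstart
    rcases List.infix_concat_iff.1 hstart with hsuf | hinf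
    · obtain ⟨p, hp⟩ := exists_false_cons_expandOnes_eq_append_false t
      obtain ⟨u, hu⟩ := hsuf
      rw [← List.cons_append, hp] at hu
      have hw' : w = (u ++ false :: p) ++ [false] := by
        rw [← List.append_cancel_right_eq (bs := [false]), ← hu]
        simp
      rw [hw', List.getLast?_concat] at hl
      simp at hl
    · exact hinf
  · simpa [hpad, hl] using hstart

theorem BalancedWord.delRun_false {w : List Bool} (hb : BalancedWord 1 w)
    (hw : ¬ [true, true] <:+: w) : BalancedWord 1 (delRun false w) := by
  by_contra hv
  obtain ⟨t, h0, h1⟩ := exists_infix_of_not_balancedWord hv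
  have := hb _ _ (true_false_expandOnes_infix_of_infix_delRun hw h1)
    (false_false_expandOnes_infix_of_infix_delRun hw h0) (by simp)
  simp [count_expandOnes, abs_le] at this
  omega

theorem BalancedWord.delRun_of_not_infix {c : Bool} {w : List Bool} (hb : BalancedWord 1 w)
    (hw : ¬ [!c, !c] <:+: w) : BalancedWord 1 (delRun c w) := by
  cases c
  · exact hb.delRun_false hw
  · have hconj := delRunAux_map_not false true (w.map not)
    simp only [Bool.not_false, List.map_map, Function.comp_def, Bool.not_not, List.map_id'] at hconj
    rw [delRun, hconj]
    refine (BalancedWord.delRun_false hb.map_not fun h => hw ?_).map_not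
    simpa using infix_map_not_iff.1 h

theorem BalancedWord.exists_desub {w : List Bool} (hb : BalancedWord 1 w) (hw : 2 ≤ w.length) :
    ∃ v, Desub w v ∧ v.length < w.length ∧ BalancedWord 1 v := by
  obtain ⟨c, hc⟩ := hb.exists_not_infix
  have hmem : c ∈ w := by
    by_contra hc'
    exact hc (pair_infix_of_not_mem hc' hw)
  exact ⟨delRun c w, desub_delRun (List.ne_nil_of_mem hmem) hc, length_delRun_lt hmem,
    hb.delRun_of_not_infix hc⟩

theorem nonOscDiagonal_of_length_le_one {w : List Bool} (hw : w.length ≤ 1) :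
    NonOscDiagonal w := by
  match w, hw with
  | [], _ => exact ⟨.B, rfl⟩
  | [a], _ => exact ⟨.B, by cases a <;> rfl⟩

/-- every 1-balanced word is tangent analytic. -/
theorem balanced_tangent_analytic (w : List Bool) (h : BalancedWord 1 w) :
    TangentAnalytic w := by
  induction hn : w.length using Nat.strong_induction_on generalizing w with
  | _ n ih =>
  by_cases hw : 2 ≤ w.length
  · obtain ⟨v, hwv, hlt, hv⟩ := h.exists_desub hw
    obtain ⟨u, hvu, hu⟩ := ih _ (hn ▸ hlt) v hv rfl
    exact ⟨u, .head hwv hvu, hu⟩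
  · exact ⟨w, .refl, nonOscDiagonal_of_length_le_one (by omega)⟩
end

section
/- Every tangent analytic binary word is tangent. -/
/-! Heights along a path of the non-oscillating automaton (counting `0` as `+1` and `1` as `-1`)
take four values, with `C` the only state at the bottom and `S` the only one at the top;
the diagonal automaton is a counter with three values. No path joins `C` and `S`, so after
leaving the core `{B, R}` a path stays in a three-height window, and shifting heights to the
diagonal states maps it onto a path of the diagonal automaton. -/

section Simulation

variable {σ τ : Type} {step : σ → Bool → Option σ} {step' : τ → Bool → Option τ}

theorem isSome_autTraj_cons {q : σ} {a : Bool} {l : List Bool} :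
    (autTraj step q (a :: l)).isSome ↔ ∃ q', step q a = some q' ∧ (autTraj step q' l).isSome := by
  cases h : step q a <;> simp [autTraj, h]

def IsSimulationOn (step : σ → Bool → Option σ) (step' : τ → Bool → Option τ) (f : σ → τ)
    (K : σ → Prop) : Prop :=
  ∀ q a q', K q → step q a = some q' → K q' ∧ step' (f q) a = some (f q')

theorem IsSimulationOn.isSome_autTraj {f : σ → τ} {K : σ → Prop}
    (hf : IsSimulationOn step step' f K) {q : σ} (hq : K q) {w : List Bool}
    (hw : (autTraj step q w).isSome) : (autTraj step' (f q) w).isSome := by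
  induction w generalizing q with
  | nil => rfl
  | cons a l ih =>
    obtain ⟨q', hstep, hl⟩ := isSome_autTraj_cons.1 hw
    obtain ⟨hq', hstep'⟩ := hf q a q' hq hstep
    exact isSome_autTraj_cons.2 ⟨f q', hstep', ih hq' hl⟩

end Simulation

namespace NOState

/-- Sends the heights `0, 1, 2` of `B, R, S` to `Q, R, S`; the value at `C` is arbitrary. -/
def upperDiag : NOState → DiagState
  | B | U | D | C => .Q
  | R | T | E => .R
  | S => .S

/-- Sends the heights `-1, 0, 1` of `C, B, R` to `Q, R, S`; the values at `S, T` are arbitrary. -/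
def lowerDiag : NOState → DiagState
  | C | S | T => .Q
  | B | U | D => .R
  | R | E => .S

def IsUpperTail (q : NOState) : Prop := q = S ∨ q = T ∨ q = U ∨ q = E

def IsLowerTail (q : NOState) : Prop := q = C ∨ q = D ∨ q = E ∨ q = U

theorem upperDiag_isSimulationOn : IsSimulationOn noStep diagStep upperDiag IsUpperTail := by
  rintro q a q' (rfl | rfl | rfl | rfl) h <;> cases a <;>
    simp only [noStep, reduceCtorEq, Option.some.injEq] at h <;> subst h <;>
    simp [IsUpperTail, upperDiag, diagStep]

theorem lowerDiag_isSimulationOn : IsSimulationOn noStep diagStep lowerDiag IsLowerTail := by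
  rintro q a q' (rfl | rfl | rfl | rfl) h <;> cases a <;>
    simp only [noStep, reduceCtorEq, Option.some.injEq] at h <;> subst h <;>
    simp [IsLowerTail, lowerDiag, diagStep]

theorem isSome_autTraj_upperDiag_or_lowerDiag {q : NOState} (hq : q = B ∨ q = R) {w : List Bool}
    (hw : (autTraj noStep q w).isSome) :
    (autTraj diagStep (upperDiag q) w).isSome ∨ (autTraj diagStep (lowerDiag q) w).isSome := by
  induction w generalizing q with
  | nil => exact Or.inl rfl
  | cons a l ih =>
    obtain ⟨q', hstep, hl⟩ := isSome_autTraj_cons.1 hw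
    rcases hq with rfl | rfl <;> cases a <;>
      simp only [noStep, Option.some.injEq] at hstep <;> subst hstep
    · exact (ih (Or.inr rfl) hl).imp (fun h => isSome_autTraj_cons.2 ⟨_, rfl, h⟩)
        (fun h => isSome_autTraj_cons.2 ⟨_, rfl, h⟩)
    · exact Or.inr (isSome_autTraj_cons.2
        ⟨_, rfl, lowerDiag_isSimulationOn.isSome_autTraj (Or.inl rfl) hl⟩)
    · exact Or.inl (isSome_autTraj_cons.2
        ⟨_, rfl, upperDiag_isSimulationOn.isSome_autTraj (Or.inl rfl) hl⟩)
    · exact (ih (Or.inl rfl) hl).imp (fun h => isSome_autTraj_cons.2 ⟨_, rfl, h⟩)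
        (fun h => isSome_autTraj_cons.2 ⟨_, rfl, h⟩)

end NOState

open NOState in
theorem NonOscDiagonal.diagonal {w : List Bool} (h : NonOscDiagonal w) : Diagonal w := by
  obtain ⟨q, hq⟩ := h
  cases q
  case B | R =>
    rcases isSome_autTraj_upperDiag_or_lowerDiag (by simp) hq with h | h <;> exact ⟨_, h⟩
  case S | T | U | E =>
    exact ⟨_, upperDiag_isSimulationOn.isSome_autTraj (by simp [IsUpperTail]) hq⟩
  case C | D =>
    exact ⟨_, lowerDiag_isSimulationOn.isSome_autTraj (by simp [IsLowerTail]) hq⟩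

/-- every tangent analytic word is tangent. -/
theorem tangent_analytic_tangent (w : List Bool) (h : TangentAnalytic w) :
    Tangent w := by
  obtain ⟨v, hchain, hv⟩ := h
  exact ⟨v, hchain, hv.diagonal⟩
end

section
/- The inclusions between the four classes are strict: there exists a tangent analytic word that is not 1-balanced, there exists a tangent word that is not tangent analytic, and there exists a 2-balanced word that is not tangent. -/
/-!
Desubstitution only applies to words avoiding `11` or avoiding `00`, so a word containing both
factors is tangent (analytic) exactly when it is already (non-oscillating) diagonal. The witnesses
`0011`, `001100` and `0011000` all contain both factors, and the remaining claims are finite checks.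
-/

theorem eq_of_reflTransGen_desub {w v : List Bool} (h11 : [true, true] <:+: w)
    (h00 : [false, false] <:+: w) (h : Relation.ReflTransGen Desub w v) : v = w := by
  rcases h.cases_head with rfl | ⟨_, ⟨_, ⟨h11', _⟩ | ⟨h00', _⟩⟩, _⟩
  · rfl
  · exact absurd h11 h11'
  · exact absurd h00 h00'

theorem tangent_iff_diagonal {w : List Bool} (h11 : [true, true] <:+: w)
    (h00 : [false, false] <:+: w) : Tangent w ↔ Diagonal w :=
  ⟨fun ⟨_, hwv, hv⟩ => eq_of_reflTransGen_desub h11 h00 hwv ▸ hv, fun h => ⟨w, .refl, h⟩⟩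

theorem tangentAnalytic_iff_nonOscDiagonal {w : List Bool} (h11 : [true, true] <:+: w)
    (h00 : [false, false] <:+: w) : TangentAnalytic w ↔ NonOscDiagonal w :=
  ⟨fun ⟨_, hwv, hv⟩ => eq_of_reflTransGen_desub h11 h00 hwv ▸ hv, fun h => ⟨w, .refl, h⟩⟩

theorem balancedWord_iff_tails_inits (k : ℕ) (w : List Bool) :
    BalancedWord k w ↔ ∀ t₁ ∈ w.tails, ∀ u ∈ t₁.inits, ∀ t₂ ∈ w.tails, ∀ v ∈ t₂.inits,
      u.length = v.length → u.count true ≤ v.count true + k ∧ v.count true ≤ u.count true + k := by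
  simp only [List.mem_tails, List.mem_inits]
  constructor
  · intro h t₁ ht₁ u hu t₂ ht₂ v hv hlen
    have := abs_sub_le_iff.1 <| h u v (hu.isInfix.trans ht₁.isInfix)
      (hv.isInfix.trans ht₂.isInfix) hlen
    omega
  · intro h u v hu hv hlen
    obtain ⟨t₁, hu, ht₁⟩ := List.infix_iff_prefix_suffix.1 hu
    obtain ⟨t₂, hv, ht₂⟩ := List.infix_iff_prefix_suffix.1 hv
    have := h t₁ ht₁ u hu t₂ ht₂ v hv hlen
    rw [abs_sub_le_iff]
    omega

instance (k : ℕ) : DecidablePred (BalancedWord k) :=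
  fun w => decidable_of_iff _ (balancedWord_iff_tails_inits k w).symm

/-- the inclusions are strict: some tangent analytic word is not 1-balanced,
some tangent word is not tangent analytic, and some 2-balanced word is not tangent. -/
theorem strict_inclusions :
    (∃ w : List Bool, TangentAnalytic w ∧ ¬ BalancedWord 1 w) ∧
    (∃ w : List Bool, Tangent w ∧ ¬ TangentAnalytic w) ∧
    (∃ w : List Bool, BalancedWord 2 w ∧ ¬ Tangent w) := by
  refine ⟨⟨[false, false, true, true], ?_, by decide⟩,
    ⟨[false, false, true, true, false, false], ?_, ?_⟩,
    ⟨[false, false, true, true, false, false, false], by decide, ?_⟩⟩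
  · exact (tangentAnalytic_iff_nonOscDiagonal (by decide) (by decide)).2 ⟨.B, by decide⟩
  · exact (tangent_iff_diagonal (by decide) (by decide)).2 ⟨.Q, by decide⟩
  · rw [tangentAnalytic_iff_nonOscDiagonal (by decide) (by decide)]
    rintro ⟨q, hq⟩
    cases q <;> revert hq <;> decide
  · rw [tangent_iff_diagonal (by decide) (by decide)]
    rintro ⟨q, hq⟩
    cases q <;> revert hq <;> decide
end
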